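/- arXiv:2407.03777 — 8 statements merged into one kernel-verified Lean document; each statement's English description precedes it below -/
import Mathlib

section
/- Let E be a real normed vector space, let k > 0, and let u : ℝ → E be three times continuously differentiable on [0,k]. Then ‖(2/k)·((u(k) − u(0))/k − u'(0)) − (u''(0) + u''(k))/2‖² ≤ (9/4) k² · sup_{s ∈ [0,k]} ‖u'''(s)‖². -/
/-!
With `M` a bound for `‖u'''‖`, the error splits as `(2 / k²) • R k - (1 / 2) • (u'' k - u'' 0)`,
where `R` is the second-order Taylor remainder of `u` at `0`. Iterating the mean value
inequality (`‖f' t‖ ≤ C tⁿ` implies `‖f t - f 0‖ ≤ C tⁿ⁺¹ / (n + 1)`) bounds `u'' k - u'' 0` by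
`M k` and `R k` by `M k³ / 6`, so the error is at most `(5 / 6) M k`.
-/

open Set

section

variable {E : Type*} [NormedAddCommGroup E] [NormedSpace ℝ E] {a b : ℝ}

theorem norm_image_sub_le_of_norm_deriv_le_pow_segment {f f' : ℝ → E} {C : ℝ} (n : ℕ)
    (hf : ∀ x ∈ Icc a b, HasDerivWithinAt f (f' x) (Icc a b) x)
    (bound : ∀ x ∈ Ico a b, ‖f' x‖ ≤ C * (x - a) ^ n) :
    ∀ x ∈ Icc a b, ‖f x - f a‖ ≤ C * (x - a) ^ (n + 1) / (n + 1) := by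
  have hB : ∀ x, HasDerivAt (fun x => C * (x - a) ^ (n + 1) / (n + 1)) (C * (x - a) ^ n) x := by
    intro x
    refine ((((hasDerivAt_id x).sub_const a).pow (n + 1)).const_mul C |>.div_const
      ((n : ℝ) + 1)).congr_deriv ?_
    simp only [id, add_tsub_cancel_right, mul_one, Nat.cast_add, Nat.cast_one]
    field_simp
  refine image_norm_le_of_norm_deriv_right_le_deriv_boundary
    (fun x hx => ((hf x hx).sub_const (f a)).continuousWithinAt) (fun x hx => ?_) (by simp) hB bound
  exact ((hf x <| Ico_subset_Icc_self hx).sub_const (f a)).mono_of_mem_nhdsWithin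
    (Icc_mem_nhdsGE_of_mem hx)

variable {M : ℝ} {u u' u'' u''' : ℝ → E}
  (hu' : ∀ t ∈ Icc a b, HasDerivWithinAt u (u' t) (Icc a b) t)
  (hu'' : ∀ t ∈ Icc a b, HasDerivWithinAt u' (u'' t) (Icc a b) t)
  (hu''' : ∀ t ∈ Icc a b, HasDerivWithinAt u'' (u''' t) (Icc a b) t)
  (hM : ∀ t ∈ Icc a b, ‖u''' t‖ ≤ M)
include hu'' hu''' hM

theorem norm_taylor_remainder_one_le :
    ∀ t ∈ Icc a b, ‖u' t - u' a - (t - a) • u'' a‖ ≤ M * (t - a) ^ 2 / 2 := by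
  have hderiv : ∀ t ∈ Icc a b, HasDerivWithinAt (fun t => u' t - (t - a) • u'' a)
      (u'' t - u'' a) (Icc a b) t := fun t ht =>
    ((hu'' t ht).sub (((hasDerivAt_id t).sub_const a).smul_const (u'' a)).hasDerivWithinAt)
      |>.congr_deriv (by simp)
  have hbound : ∀ t ∈ Ico a b, ‖u'' t - u'' a‖ ≤ M * (t - a) ^ 1 := fun t ht => by
    simpa using norm_image_sub_le_of_norm_deriv_le_segment' hu'''
      (fun s hs => hM s (Ico_subset_Icc_self hs)) t (Ico_subset_Icc_self ht)
  intro t ht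
  have := norm_image_sub_le_of_norm_deriv_le_pow_segment 1 hderiv hbound t ht
  convert this using 1
  · simp only [sub_self, zero_smul, sub_zero]; abel_nf
  · push_cast; ring

include hu'

theorem norm_taylor_remainder_two_le :
    ∀ t ∈ Icc a b, ‖u t - u a - (t - a) • u' a - ((t - a) ^ 2 / 2) • u'' a‖
      ≤ M * (t - a) ^ 3 / 6 := by
  have hderiv : ∀ t ∈ Icc a b, HasDerivWithinAt
      (fun t => u t - (t - a) • u' a - ((t - a) ^ 2 / 2) • u'' a)
      (u' t - u' a - (t - a) • u'' a) (Icc a b) t := fun t ht => by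
    have hsq : HasDerivAt (fun t : ℝ => (t - a) ^ 2 / 2) (t - a) t := by
      refine ((((hasDerivAt_id t).sub_const a).pow 2).div_const 2).congr_deriv ?_
      simp only [id]; ring
    exact (((hu' t ht).sub (((hasDerivAt_id t).sub_const a).smul_const (u' a)).hasDerivWithinAt).sub
      (hsq.smul_const (u'' a)).hasDerivWithinAt).congr_deriv (by simp)
  have hbound : ∀ t ∈ Ico a b, ‖u' t - u' a - (t - a) • u'' a‖ ≤ M / 2 * (t - a) ^ 2 :=
    fun t ht => by
      simpa [mul_div_right_comm] using
        norm_taylor_remainder_one_le hu'' hu''' hM t (Ico_subset_Icc_self ht)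
  intro t ht
  have := norm_image_sub_le_of_norm_deriv_le_pow_segment 2 hderiv hbound t ht
  convert this using 1
  · simp only [sub_self, zero_smul, sub_zero, zero_pow two_ne_zero, zero_div]
    congr 1; abel
  · push_cast; ring

end

theorem norm_initial_truncation_error_le {E : Type*} [NormedAddCommGroup E] [NormedSpace ℝ E]
    {a b M : ℝ} {u u' u'' u''' : ℝ → E} (hab : a < b)
    (hu' : ∀ t ∈ Icc a b, HasDerivWithinAt u (u' t) (Icc a b) t)
    (hu'' : ∀ t ∈ Icc a b, HasDerivWithinAt u' (u'' t) (Icc a b) t)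
    (hu''' : ∀ t ∈ Icc a b, HasDerivWithinAt u'' (u''' t) (Icc a b) t)
    (hM : ∀ t ∈ Icc a b, ‖u''' t‖ ≤ M) :
    ‖(2 / (b - a)) • ((1 / (b - a)) • (u b - u a) - u' a) - (1 / 2 : ℝ) • (u'' a + u'' b)‖
      ≤ 5 / 6 * M * (b - a) := by
  set k := b - a
  have hk : 0 < k := sub_pos.2 hab
  have hb : b ∈ Icc a b := right_mem_Icc.2 hab.le
  have htaylor := norm_taylor_remainder_two_le hu' hu'' hu''' hM b hb
  have hsecond := norm_image_sub_le_of_norm_deriv_le_segment' hu'''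
    (fun s hs => hM s (Ico_subset_Icc_self hs)) b hb
  have hsplit : (2 / k) • ((1 / k) • (u b - u a) - u' a) - (1 / 2 : ℝ) • (u'' a + u'' b)
      = (2 / k ^ 2) • (u b - u a - k • u' a - (k ^ 2 / 2) • u'' a)
        - (1 / 2 : ℝ) • (u'' b - u'' a) := by
    simp only [smul_sub, smul_smul]
    rw [show 2 / k * (1 / k) = 2 / k ^ 2 by field_simp, show 2 / k ^ 2 * k = 2 / k by field_simp,
      show 2 / k ^ 2 * (k ^ 2 / 2) = 1 by field_simp]
    module
  calc _ = ‖(2 / k ^ 2) • (u b - u a - k • u' a - (k ^ 2 / 2) • u'' a)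
          - (1 / 2 : ℝ) • (u'' b - u'' a)‖ := by rw [hsplit]
    _ ≤ ‖(2 / k ^ 2) • (u b - u a - k • u' a - (k ^ 2 / 2) • u'' a)‖
        + ‖(1 / 2 : ℝ) • (u'' b - u'' a)‖ := norm_sub_le _ _
    _ ≤ 2 / k ^ 2 * (M * k ^ 3 / 6) + 1 / 2 * (M * k) := by
      rw [norm_smul, norm_smul, Real.norm_of_nonneg (by positivity),
        Real.norm_of_nonneg (by positivity)]
      gcongr
    _ = 5 / 6 * M * k := by field_simp; ring

/-- Truncation error bound for the initial-step approximation `R⁰`. -/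
theorem truncation_error_initial
    {E : Type*} [NormedAddCommGroup E] [NormedSpace ℝ E]
    (k : ℝ) (hk : 0 < k) (u u' u'' u''' : ℝ → E)
    (hu' : ∀ t ∈ Set.Icc (0 : ℝ) k, HasDerivWithinAt u (u' t) (Set.Icc (0 : ℝ) k) t)
    (hu'' : ∀ t ∈ Set.Icc (0 : ℝ) k, HasDerivWithinAt u' (u'' t) (Set.Icc (0 : ℝ) k) t)
    (hu''' : ∀ t ∈ Set.Icc (0 : ℝ) k, HasDerivWithinAt u'' (u''' t) (Set.Icc (0 : ℝ) k) t)
    (hcont : ContinuousOn u''' (Set.Icc (0 : ℝ) k)) :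
    ‖(2 / k) • ((1 / k) • (u k - u 0) - u' 0) - (1 / 2 : ℝ) • (u'' 0 + u'' k)‖ ^ 2
      ≤ (9 / 4) * k ^ 2 * ⨆ s : Set.Icc (0 : ℝ) k, ‖u''' ↑s‖ ^ 2 := by
  set S := ⨆ s : Icc (0 : ℝ) k, ‖u''' ↑s‖ ^ 2
  have hbdd : BddAbove (range fun s : Icc (0 : ℝ) k => ‖u''' ↑s‖ ^ 2) :=
    (isCompact_range (hcont.norm.pow 2).domRestrict).bddAbove
  have hM : ∀ t ∈ Icc 0 k, ‖u''' t‖ ≤ √S := fun t ht =>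
    Real.le_sqrt_of_sq_le (le_ciSup hbdd (⟨t, ht⟩ : Icc (0 : ℝ) k))
  have hS : 0 ≤ S := (sq_nonneg _).trans (le_ciSup hbdd ⟨0, left_mem_Icc.2 hk.le⟩)
  have hR := norm_initial_truncation_error_le hk hu' hu'' hu''' hM
  rw [sub_zero] at hR
  calc _ ≤ (5 / 6 * √S * k) ^ 2 := pow_le_pow_left₀ (norm_nonneg _) hR 2
    _ ≤ 9 / 4 * k ^ 2 * S := by
      rw [mul_pow, mul_pow, Real.sq_sqrt hS]
      nlinarith [mul_nonneg (sq_nonneg k) hS]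
end

section
/- Let E be a real Banach space, let k > 0, t ∈ ℝ, and let u : ℝ → E be four times continuously differentiable on [t−k, t+k]. Then ‖(u(t+k) − 2u(t) + u(t−k))/k² − u''(t)‖² ≤ (k³/126) ∫_{t−k}^{t+k} ‖u''''(s)‖² ds. -/
/-!
Taylor's formula with integral remainder about `t`, taken once towards `t + k` and once towards
`t - k`, shows that `u (t + k) - 2 u t + u (t - k) - k² u'' t` is the difference of the two
remainders `∫ ((t ± k - s)³ / 6) • u'''' s ds` over `[t, t + k]` and `[t - k, t]`. By
Cauchy–Schwarz, the squared norm of each is at most `∫₀ᵏ (r³ / 6)² dr = k⁷ / 252` times the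
integral of `‖u''''‖²` over its half interval. Then `(a + b)² ≤ 2 (a² + b²)` and the factor
`k⁻⁴` give the constant `k³ / 126`.
-/

open Set MeasureTheory

theorem norm_sub_sq_le_two_mul {F : Type*} [SeminormedAddGroup F] (x y : F) :
    ‖x - y‖ ^ 2 ≤ 2 * (‖x‖ ^ 2 + ‖y‖ ^ 2) :=
  (pow_le_pow_left₀ (norm_nonneg _) (norm_sub_le x y) 2).trans add_sq_le

section

variable {E : Type*} [NormedAddCommGroup E] [NormedSpace ℝ E]

noncomputable def cubicTaylorAt (u u' u'' u''' : ℝ → E) (c s : ℝ) : E :=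
  u s + (c - s) • u' s + ((c - s) ^ 2 / 2) • u'' s + ((c - s) ^ 3 / 6) • u''' s

section Taylor

variable {u u' u'' u''' u'''' : ℝ → E}

/-- As a function of the expansion point `s`, the derivative of the Taylor polynomial
telescopes to its last term. -/
theorem HasDerivWithinAt.cubicTaylorAt {S : Set ℝ} {s : ℝ} (c : ℝ)
    (h₁ : HasDerivWithinAt u (u' s) S s) (h₂ : HasDerivWithinAt u' (u'' s) S s)
    (h₃ : HasDerivWithinAt u'' (u''' s) S s) (h₄ : HasDerivWithinAt u''' (u'''' s) S s) :
    HasDerivWithinAt (cubicTaylorAt u u' u'' u''' c) (((c - s) ^ 3 / 6) • u'''' s) S s := by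
  have d₁ : HasDerivWithinAt (fun y => c - y) (-1) S s := (hasDerivWithinAt_id s S).const_sub c
  have d₂ := (d₁.pow 2).div_const 2
  have d₃ := (d₁.pow 3).div_const 6
  refine (((h₁.add (d₁.smul h₂)).add (d₂.smul h₃)).add (d₃.smul h₄)).congr_deriv ?_
  simp only [Pi.pow_apply, Nat.cast_ofNat, Nat.reduceSub, pow_one]
  module

theorem cubicTaylorAt_add_integral_remainder [CompleteSpace E] {S : Set ℝ} {a c : ℝ}
    (hS : uIcc a c ⊆ S)
    (hu' : ∀ s ∈ S, HasDerivWithinAt u (u' s) S s)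
    (hu'' : ∀ s ∈ S, HasDerivWithinAt u' (u'' s) S s)
    (hu''' : ∀ s ∈ S, HasDerivWithinAt u'' (u''' s) S s)
    (hu'''' : ∀ s ∈ S, HasDerivWithinAt u''' (u'''' s) S s)
    (hcont : ContinuousOn u'''' S) :
    cubicTaylorAt u u' u'' u''' c a + ∫ s in a..c, ((c - s) ^ 3 / 6) • u'''' s = u c := by
  have hderiv : ∀ s ∈ S, HasDerivWithinAt (cubicTaylorAt u u' u'' u''' c)
      (((c - s) ^ 3 / 6) • u'''' s) S s := fun s hs =>
    .cubicTaylorAt c (hu' s hs) (hu'' s hs) (hu''' s hs) (hu'''' s hs)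
  rw [intervalIntegral.integral_eq_sub_of_hasDeriv_right
    (fun s hs => (hderiv s (hS hs)).continuousWithinAt.mono hS)
    (fun s hs => ((hderiv s (hS (Ioo_subset_Icc_self hs))).hasDerivAt
      (Filter.mem_of_superset (Icc_mem_nhds hs.1 hs.2) hS)).hasDerivWithinAt)
    (((continuousOn_const.sub continuousOn_id).pow 3 |>.div_const 6).smul
      (hcont.mono hS)).intervalIntegrable]
  simp [cubicTaylorAt]

theorem central_second_difference_eq [CompleteSpace E] {S : Set ℝ} {t k : ℝ}
    (hSl : uIcc t (t - k) ⊆ S) (hSr : uIcc t (t + k) ⊆ S)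
    (hu' : ∀ s ∈ S, HasDerivWithinAt u (u' s) S s)
    (hu'' : ∀ s ∈ S, HasDerivWithinAt u' (u'' s) S s)
    (hu''' : ∀ s ∈ S, HasDerivWithinAt u'' (u''' s) S s)
    (hu'''' : ∀ s ∈ S, HasDerivWithinAt u''' (u'''' s) S s)
    (hcont : ContinuousOn u'''' S) :
    u (t + k) - (2 : ℝ) • u t + u (t - k) = (k ^ 2) • u'' t +
      ((∫ s in t..t + k, ((t + k - s) ^ 3 / 6) • u'''' s) -
        ∫ s in t - k..t, ((t - k - s) ^ 3 / 6) • u'''' s) := by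
  rw [← cubicTaylorAt_add_integral_remainder hSr hu' hu'' hu''' hu'''' hcont,
    ← cubicTaylorAt_add_integral_remainder hSl hu' hu'' hu''' hu'''' hcont,
    intervalIntegral.integral_symm (t - k)]
  simp only [cubicTaylorAt]
  module

end Taylor

theorem sq_norm_integral_smul_le {α : Type*} [MeasurableSpace α] {μ : Measure α}
    {w : α → ℝ} {f : α → E} (hw : MemLp w 2 μ) (hf : MemLp f 2 μ) :
    ‖∫ a, w a • f a ∂μ‖ ^ 2 ≤ (∫ a, w a ^ 2 ∂μ) * ∫ a, ‖f a‖ ^ 2 ∂μ := by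
  have holder := integral_mul_norm_le_Lp_mul_Lq Real.HolderConjugate.two_two
    (by simpa using hw) (by simpa using hf.norm)
  simp only [Real.norm_eq_abs, abs_norm, sq_abs, Real.rpow_two, ← Real.sqrt_eq_rpow] at holder
  calc ‖∫ a, w a • f a ∂μ‖ ^ 2 ≤ (∫ a, |w a| * ‖f a‖ ∂μ) ^ 2 := by
        gcongr
        simpa only [norm_smul, Real.norm_eq_abs] using
          norm_integral_le_integral_norm (μ := μ) fun a => w a • f a
    _ ≤ (√(∫ a, w a ^ 2 ∂μ) * √(∫ a, ‖f a‖ ^ 2 ∂μ)) ^ 2 := by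
        have : 0 ≤ ∫ a, |w a| * ‖f a‖ ∂μ := integral_nonneg fun a => by positivity
        gcongr
    _ = (∫ a, w a ^ 2 ∂μ) * ∫ a, ‖f a‖ ^ 2 ∂μ := by
        rw [mul_pow, Real.sq_sqrt (integral_nonneg fun a => sq_nonneg _),
          Real.sq_sqrt (integral_nonneg fun a => sq_nonneg _)]

theorem ContinuousOn.memLp_two_restrict_Ioc {F : Type*} [NormedAddCommGroup F] {f : ℝ → F}
    {a b : ℝ} (hf : ContinuousOn f (Icc a b)) : MemLp f 2 (volume.restrict (Ioc a b)) :=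
  (memLp_two_iff_integrable_sq_norm
    ((hf.mono Ioc_subset_Icc_self).aestronglyMeasurable measurableSet_Ioc)).2
    ((hf.norm.pow 2).integrableOn_Icc.mono_set Ioc_subset_Icc_self)

theorem sq_norm_intervalIntegral_smul_le {a b : ℝ} (hab : a ≤ b) {w : ℝ → ℝ} {f : ℝ → E}
    (hw : ContinuousOn w (Icc a b)) (hf : ContinuousOn f (Icc a b)) :
    ‖∫ s in a..b, w s • f s‖ ^ 2 ≤ (∫ s in a..b, w s ^ 2) * ∫ s in a..b, ‖f s‖ ^ 2 := by
  simp only [intervalIntegral.integral_of_le hab]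
  exact sq_norm_integral_smul_le hw.memLp_two_restrict_Ioc hf.memLp_two_restrict_Ioc

theorem integral_cubic_kernel_sq (a b c : ℝ) :
    ∫ s in a..b, ((c - s) ^ 3 / 6) ^ 2 = ((c - a) ^ 7 - (c - b) ^ 7) / 252 := by
  rw [intervalIntegral.integral_comp_sub_left (fun x : ℝ => (x ^ 3 / 6) ^ 2) c]
  simp_rw [div_pow, ← pow_mul]
  rw [intervalIntegral.integral_div, integral_pow]
  ring

theorem sq_norm_integral_cubic_kernel_smul_le {a b : ℝ} (hab : a ≤ b) (c : ℝ) {f : ℝ → E}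
    (hf : ContinuousOn f (Icc a b)) :
    ‖∫ s in a..b, ((c - s) ^ 3 / 6) • f s‖ ^ 2
      ≤ ((c - a) ^ 7 - (c - b) ^ 7) / 252 * ∫ s in a..b, ‖f s‖ ^ 2 := by
  rw [← integral_cubic_kernel_sq]
  exact sq_norm_intervalIntegral_smul_le hab (by fun_prop) hf

end

/-- Bound on the truncation error `τⁿ` of the second-order central difference quotient. -/
theorem truncation_error_central_difference_bound
    {E : Type*} [NormedAddCommGroup E] [NormedSpace ℝ E] [CompleteSpace E]
    (k t : ℝ) (hk : 0 < k) (u u' u'' u''' u'''' : ℝ → E)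
    (hu' : ∀ s ∈ Set.Icc (t - k) (t + k),
      HasDerivWithinAt u (u' s) (Set.Icc (t - k) (t + k)) s)
    (hu'' : ∀ s ∈ Set.Icc (t - k) (t + k),
      HasDerivWithinAt u' (u'' s) (Set.Icc (t - k) (t + k)) s)
    (hu''' : ∀ s ∈ Set.Icc (t - k) (t + k),
      HasDerivWithinAt u'' (u''' s) (Set.Icc (t - k) (t + k)) s)
    (hu'''' : ∀ s ∈ Set.Icc (t - k) (t + k),
      HasDerivWithinAt u''' (u'''' s) (Set.Icc (t - k) (t + k)) s)
    (hcont : ContinuousOn u'''' (Set.Icc (t - k) (t + k))) :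
    ‖(k ^ 2)⁻¹ • (u (t + k) - (2 : ℝ) • u t + u (t - k)) - u'' t‖ ^ 2
      ≤ (k ^ 3 / 126) * ∫ s in (t - k)..(t + k), ‖u'''' s‖ ^ 2 := by
  have hmid : t ∈ Icc (t - k) (t + k) := ⟨by linarith, by linarith⟩
  have hlo : t - k ∈ Icc (t - k) (t + k) := left_mem_Icc.2 (by linarith)
  have hhi : t + k ∈ Icc (t - k) (t + k) := right_mem_Icc.2 (by linarith)
  have hleft : Icc (t - k) t ⊆ Icc (t - k) (t + k) := Icc_subset_Icc le_rfl hmid.2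
  have hright : Icc t (t + k) ⊆ Icc (t - k) (t + k) := Icc_subset_Icc hmid.1 le_rfl
  set Rp := ∫ s in t..t + k, ((t + k - s) ^ 3 / 6) • u'''' s
  set Rm := ∫ s in t - k..t, ((t - k - s) ^ 3 / 6) • u'''' s
  set Ip := ∫ s in t..t + k, ‖u'''' s‖ ^ 2
  set Im := ∫ s in t - k..t, ‖u'''' s‖ ^ 2
  have hdiff : u (t + k) - (2 : ℝ) • u t + u (t - k) = (k ^ 2) • u'' t + (Rp - Rm) :=
    central_second_difference_eq (uIcc_subset_Icc hmid hlo) (uIcc_subset_Icc hmid hhi)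
      hu' hu'' hu''' hu'''' hcont
  have hRp : ‖Rp‖ ^ 2 ≤ k ^ 7 / 252 * Ip := by
    convert sq_norm_integral_cubic_kernel_smul_le (by linarith) (t + k)
      (hcont.mono hright) using 2
    ring
  have hRm : ‖Rm‖ ^ 2 ≤ k ^ 7 / 252 * Im := by
    convert sq_norm_integral_cubic_kernel_smul_le (by linarith) (t - k)
      (hcont.mono hleft) using 2
    ring
  have hsplit : Im + Ip = ∫ s in t - k..t + k, ‖u'''' s‖ ^ 2 :=
    intervalIntegral.integral_add_adjacent_intervals
      (ContinuousOn.intervalIntegrable_of_Icc (by linarith) ((hcont.mono hleft).norm.pow 2))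
      (ContinuousOn.intervalIntegrable_of_Icc (by linarith) ((hcont.mono hright).norm.pow 2))
  rw [← hsplit, hdiff, smul_add, smul_smul, inv_mul_cancel₀ (by positivity), one_smul,
    add_sub_cancel_left, norm_smul, norm_inv, norm_pow, Real.norm_of_nonneg hk.le]
  calc ((k ^ 2)⁻¹ * ‖Rp - Rm‖) ^ 2 = (k ^ 2)⁻¹ ^ 2 * ‖Rp - Rm‖ ^ 2 := mul_pow _ _ _
    _ ≤ (k ^ 2)⁻¹ ^ 2 * (2 * (‖Rp‖ ^ 2 + ‖Rm‖ ^ 2)) := by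
        gcongr
        exact norm_sub_sq_le_two_mul Rp Rm
    _ ≤ (k ^ 2)⁻¹ ^ 2 * (2 * (k ^ 7 / 252 * Ip + k ^ 7 / 252 * Im)) := by gcongr
    _ = k ^ 3 / 126 * (Im + Ip) := by field_simp; ring
end

section
/- Let E be a real Banach space, let k > 0, t ∈ ℝ, and let u : ℝ → E be four times continuously differentiable on [t−k, t+k]. Then (u(t+k) − 2u(t) + u(t−k))/k² − (u''(t+k) + 2u''(t) + u''(t−k))/4 = (1/12) ∫_{−k}^{k} (k − |s|) (2(1 − |s|/k)² − 3) u''''(t+s) ds, where the integral is a Bochner integral. -/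
section TaylorAux
open intervalIntegral Set

variable {E : Type*} [NormedAddCommGroup E] [NormedSpace ℝ E] [CompleteSpace E]

lemma taylor_one_aux (A B a b : ℝ) (ha : a ∈ Set.Icc A B) (hb : b ∈ Set.Icc A B)
    (f f1 f2 : ℝ → E)
    (h1 : ∀ s ∈ Set.Icc A B, HasDerivWithinAt f (f1 s) (Set.Icc A B) s)
    (h2 : ∀ s ∈ Set.Icc A B, HasDerivWithinAt f1 (f2 s) (Set.Icc A B) s)
    (hc : ContinuousOn f2 (Set.Icc A B)) :
    f b = f a + (b - a) • f1 a + ∫ s in a..b, (b - s) • f2 s := by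
  set H : ℝ → E := fun s => f s + (b - s) • f1 s with hH
  have hsub : uIcc a b ⊆ Set.Icc A B := Set.uIcc_subset_Icc ha hb
  have hf1c : ContinuousOn f1 (Set.Icc A B) := fun x hx => (h2 x hx).continuousWithinAt
  have hfc : ContinuousOn f (Set.Icc A B) := fun x hx => (h1 x hx).continuousWithinAt
  have hHc : ContinuousOn H (uIcc a b) :=
    ((hfc.add (((continuous_const.sub continuous_id).continuousOn).smul hf1c)).mono hsub)
  have hint : IntervalIntegrable (fun s => (b - s) • f2 s) MeasureTheory.volume a b :=
    ((((continuous_const.sub continuous_id).continuousOn).smul (hc.mono hsub))).intervalIntegrable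
  have hderiv : ∀ x ∈ Set.Ioo (min a b) (max a b),
      HasDerivWithinAt H ((b - x) • f2 x) (Set.Ioi x) x := by
    intro x hx
    have hxI : x ∈ Set.Ioo A B := by
      constructor
      · exact lt_of_le_of_lt (le_min ha.1 hb.1) hx.1
      · exact lt_of_lt_of_le hx.2 (max_le ha.2 hb.2)
    have hnb : Set.Icc A B ∈ nhds x := Icc_mem_nhds hxI.1 hxI.2
    have hxm : x ∈ Set.Icc A B := Set.mem_Icc_of_Ioo hxI
    have d1 : HasDerivAt f (f1 x) x := (h1 x hxm).hasDerivAt hnb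
    have d2 : HasDerivAt f1 (f2 x) x := (h2 x hxm).hasDerivAt hnb
    have dc : HasDerivAt (fun s : ℝ => b - s) (-1) x := by
      simpa using (hasDerivAt_id x).const_sub b
    have dH : HasDerivAt H (f1 x + ((b - x) • f2 x + (-1 : ℝ) • f1 x)) x := d1.add (dc.smul d2)
    have : f1 x + ((b - x) • f2 x + (-1 : ℝ) • f1 x) = (b - x) • f2 x := by
      match_scalars <;> ring
    rw [this] at dH
    exact dH.hasDerivWithinAt
  have key := integral_eq_sub_of_hasDeriv_right hHc hderiv hint
  have : H b = f b := by simp [hH]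
  rw [this] at key
  rw [hH] at key
  simp only at key
  have : f b = (f a + (b - a) • f1 a) + ∫ s in a..b, (b - s) • f2 s := by
    rw [key]; abel
  simpa using this


lemma taylor_three_aux (A B a b : ℝ) (ha : a ∈ Set.Icc A B) (hb : b ∈ Set.Icc A B)
    (f f1 f2 f3 f4 : ℝ → E)
    (h1 : ∀ s ∈ Set.Icc A B, HasDerivWithinAt f (f1 s) (Set.Icc A B) s)
    (h2 : ∀ s ∈ Set.Icc A B, HasDerivWithinAt f1 (f2 s) (Set.Icc A B) s)
    (h3 : ∀ s ∈ Set.Icc A B, HasDerivWithinAt f2 (f3 s) (Set.Icc A B) s)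
    (h4 : ∀ s ∈ Set.Icc A B, HasDerivWithinAt f3 (f4 s) (Set.Icc A B) s)
    (hc : ContinuousOn f4 (Set.Icc A B)) :
    f b = f a + (b - a) • f1 a + ((b - a) ^ 2 / 2) • f2 a + ((b - a) ^ 3 / 6) • f3 a
      + ∫ s in a..b, ((b - s) ^ 3 / 6) • f4 s := by
  set H : ℝ → E := fun s => f s + (b - s) • f1 s + ((b - s) ^ 2 / 2) • f2 s
    + ((b - s) ^ 3 / 6) • f3 s with hH
  have hsub : uIcc a b ⊆ Set.Icc A B := Set.uIcc_subset_Icc ha hb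
  have hf1c : ContinuousOn f1 (Set.Icc A B) := fun x hx => (h2 x hx).continuousWithinAt
  have hf2c : ContinuousOn f2 (Set.Icc A B) := fun x hx => (h3 x hx).continuousWithinAt
  have hf3c : ContinuousOn f3 (Set.Icc A B) := fun x hx => (h4 x hx).continuousWithinAt
  have hfc : ContinuousOn f (Set.Icc A B) := fun x hx => (h1 x hx).continuousWithinAt
  have c1 : Continuous fun s : ℝ => b - s := continuous_const.sub continuous_id
  have hHc : ContinuousOn H (uIcc a b) :=
    (((hfc.add ((c1.continuousOn).smul hf1c)).add
      (((c1.pow 2).div_const 2).continuousOn.smul hf2c)).add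
      (((c1.pow 3).div_const 6).continuousOn.smul hf3c)).mono hsub
  have hint : IntervalIntegrable (fun s => ((b - s) ^ 3 / 6) • f4 s) MeasureTheory.volume a b :=
    ((((c1.pow 3).div_const 6).continuousOn).smul (hc.mono hsub)).intervalIntegrable
  have hderiv : ∀ x ∈ Set.Ioo (min a b) (max a b),
      HasDerivWithinAt H (((b - x) ^ 3 / 6) • f4 x) (Set.Ioi x) x := by
    intro x hx
    have hxI : x ∈ Set.Ioo A B :=
      ⟨lt_of_le_of_lt (le_min ha.1 hb.1) hx.1, lt_of_lt_of_le hx.2 (max_le ha.2 hb.2)⟩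
    have hnb : Set.Icc A B ∈ nhds x := Icc_mem_nhds hxI.1 hxI.2
    have hxm : x ∈ Set.Icc A B := Set.mem_Icc_of_Ioo hxI
    have d1 : HasDerivAt f (f1 x) x := (h1 x hxm).hasDerivAt hnb
    have d2 : HasDerivAt f1 (f2 x) x := (h2 x hxm).hasDerivAt hnb
    have d3 : HasDerivAt f2 (f3 x) x := (h3 x hxm).hasDerivAt hnb
    have d4 : HasDerivAt f3 (f4 x) x := (h4 x hxm).hasDerivAt hnb
    have dc : HasDerivAt (fun s : ℝ => b - s) (-1) x := by
      simpa using (hasDerivAt_id x).const_sub b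
    have dq : HasDerivAt (fun s : ℝ => (b - s) ^ 2 / 2)
        ((2 : ℕ) * (b - x) ^ 1 * (-1) / 2) x := (dc.pow 2).div_const 2
    have dcu : HasDerivAt (fun s : ℝ => (b - s) ^ 3 / 6)
        ((3 : ℕ) * (b - x) ^ 2 * (-1) / 6) x := (dc.pow 3).div_const 6
    have dH : HasDerivAt H
        (f1 x + ((b - x) • f2 x + (-1 : ℝ) • f1 x)
          + (((b - x) ^ 2 / 2) • f3 x + ((2 : ℕ) * (b - x) ^ 1 * (-1) / 2) • f2 x)
          + (((b - x) ^ 3 / 6) • f4 x + ((3 : ℕ) * (b - x) ^ 2 * (-1) / 6) • f3 x)) x :=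
      ((d1.add (dc.smul d2)).add (dq.smul d3)).add (dcu.smul d4)
    have heq : (f1 x + ((b - x) • f2 x + (-1 : ℝ) • f1 x)
          + (((b - x) ^ 2 / 2) • f3 x + ((2 : ℕ) * (b - x) ^ 1 * (-1) / 2) • f2 x)
          + (((b - x) ^ 3 / 6) • f4 x + ((3 : ℕ) * (b - x) ^ 2 * (-1) / 6) • f3 x))
        = ((b - x) ^ 3 / 6) • f4 x := by
      match_scalars <;> ring
    rw [heq] at dH
    exact dH.hasDerivWithinAt
  have key := integral_eq_sub_of_hasDeriv_right hHc hderiv hint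
  have hb' : H b = f b := by simp [hH]
  rw [hb', hH] at key
  simp only at key
  have : f b = (f a + (b - a) • f1 a + ((b - a) ^ 2 / 2) • f2 a + ((b - a) ^ 3 / 6) • f3 a)
      + ∫ s in a..b, ((b - s) ^ 3 / 6) • f4 s := by rw [key]; abel
  simpa using this
end TaylorAux

/-- Integral representation of the truncation error `rⁿ` of the implicit scheme. -/
theorem truncation_error_implicit_repr
    {E : Type*} [NormedAddCommGroup E] [NormedSpace ℝ E] [CompleteSpace E]
    (k t : ℝ) (hk : 0 < k) (u u' u'' u''' u'''' : ℝ → E)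
    (hu' : ∀ s ∈ Set.Icc (t - k) (t + k),
      HasDerivWithinAt u (u' s) (Set.Icc (t - k) (t + k)) s)
    (hu'' : ∀ s ∈ Set.Icc (t - k) (t + k),
      HasDerivWithinAt u' (u'' s) (Set.Icc (t - k) (t + k)) s)
    (hu''' : ∀ s ∈ Set.Icc (t - k) (t + k),
      HasDerivWithinAt u'' (u''' s) (Set.Icc (t - k) (t + k)) s)
    (hu'''' : ∀ s ∈ Set.Icc (t - k) (t + k),
      HasDerivWithinAt u''' (u'''' s) (Set.Icc (t - k) (t + k)) s)
    (hcont : ContinuousOn u'''' (Set.Icc (t - k) (t + k))) :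
    (k ^ 2)⁻¹ • (u (t + k) - (2 : ℝ) • u t + u (t - k))
        - (1 / 4 : ℝ) • (u'' (t + k) + (2 : ℝ) • u'' t + u'' (t - k))
      = (1 / 12 : ℝ) •
          ∫ s in (-k)..k, ((k - |s|) * (2 * (1 - |s| / k) ^ 2 - 3)) • u'''' (t + s) := by
  have hk0 : k ≠ 0 := ne_of_gt hk
  have htm : t ∈ Set.Icc (t - k) (t + k) := ⟨by linarith, by linarith⟩
  have htp : t + k ∈ Set.Icc (t - k) (t + k) := ⟨by linarith, le_refl _⟩
  have htmm : t - k ∈ Set.Icc (t - k) (t + k) := ⟨le_refl _, by linarith⟩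
  have e3p := taylor_three_aux (t-k) (t+k) t (t+k) htm htp u u' u'' u''' u''''
      hu' hu'' hu''' hu'''' hcont
  have e3m := taylor_three_aux (t-k) (t+k) t (t-k) htm htmm u u' u'' u''' u''''
      hu' hu'' hu''' hu'''' hcont
  have e1p := taylor_one_aux (t-k) (t+k) t (t+k) htm htp u'' u''' u'''' hu''' hu'''' hcont
  have e1m := taylor_one_aux (t-k) (t+k) t (t-k) htm htmm u'' u''' u'''' hu''' hu'''' hcont
  set J3p := ∫ s in t..(t+k), ((t + k - s) ^ 3 / 6) • u'''' s with hJ3p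
  set J3m := ∫ s in t..(t-k), ((t - k - s) ^ 3 / 6) • u'''' s with hJ3m
  set J1p := ∫ s in t..(t+k), (t + k - s) • u'''' s with hJ1p
  set J1m := ∫ s in t..(t-k), (t - k - s) • u'''' s with hJ1m
  have hsubp : Set.uIcc t (t+k) ⊆ Set.Icc (t-k) (t+k) := Set.uIcc_subset_Icc htm htp
  have hsubm : Set.uIcc (t-k) t ⊆ Set.Icc (t-k) (t+k) := Set.uIcc_subset_Icc htmm htm
  have hcp : ContinuousOn u'''' (Set.uIcc t (t+k)) := hcont.mono hsubp
  have hcm : ContinuousOn u'''' (Set.uIcc (t-k) t) := hcont.mono hsubm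
  have h3p : IntervalIntegrable (fun x => (k ^ 2)⁻¹ • (((t + k - x) ^ 3 / 6) • u'''' x))
      MeasureTheory.volume t (t+k) :=
    (((((continuous_const.sub continuous_id).pow 3).div_const
      6).continuousOn.smul hcp).intervalIntegrable).smul _
  have h1p : IntervalIntegrable (fun x => (1/4 : ℝ) • ((t + k - x) • u'''' x))
      MeasureTheory.volume t (t+k) :=
    (((continuous_const.sub continuous_id).continuousOn.smul hcp).intervalIntegrable).smul _
  have h3m : IntervalIntegrable (fun x => (k ^ 2)⁻¹ • (((t - k - x) ^ 3 / 6) • u'''' x))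
      MeasureTheory.volume (t-k) t :=
    (((((continuous_const.sub continuous_id).pow 3).div_const
      6).continuousOn.smul hcm).intervalIntegrable).smul _
  have h1m : IntervalIntegrable (fun x => (1/4 : ℝ) • ((t - k - x) • u'''' x))
      MeasureTheory.volume (t-k) t :=
    (((continuous_const.sub continuous_id).continuousOn.smul hcm).intervalIntegrable).smul _
  have hWc : Continuous (fun x : ℝ =>
      ((1/12 : ℝ) * ((k - |x - t|) * (2 * (1 - |x - t| / k) ^ 2 - 3)))) := by
    have habs : Continuous (fun x : ℝ => |x - t|) :=
      continuous_abs.comp (continuous_id.sub continuous_const)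
    exact continuous_const.mul ((continuous_const.sub habs).mul
      ((continuous_const.mul ((continuous_const.sub (habs.div_const k)).pow 2)).sub
        continuous_const))
  have hWintp : IntervalIntegrable
      (fun x => ((1/12 : ℝ) * ((k - |x - t|) * (2 * (1 - |x - t| / k) ^ 2 - 3))) • u'''' x)
      MeasureTheory.volume t (t+k) :=
    (hWc.continuousOn.smul hcp).intervalIntegrable
  have hWintm : IntervalIntegrable
      (fun x => ((1/12 : ℝ) * ((k - |x - t|) * (2 * (1 - |x - t| / k) ^ 2 - 3))) • u'''' x)
      MeasureTheory.volume (t-k) t :=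
    (hWc.continuousOn.smul hcm).intervalIntegrable
  -- right half
  have right : (∫ x in t..(t+k),
        ((1/12 : ℝ) * ((k - |x - t|) * (2 * (1 - |x - t| / k) ^ 2 - 3))) • u'''' x)
      = (k ^ 2)⁻¹ • J3p - (1/4 : ℝ) • J1p := by
    rw [hJ3p, hJ1p, ← intervalIntegral.integral_smul, ← intervalIntegral.integral_smul,
      ← intervalIntegral.integral_sub h3p h1p]
    apply intervalIntegral.integral_congr
    intro x hx
    rw [Set.uIcc_of_le (by linarith : t ≤ t + k)] at hx
    have habs : |x - t| = x - t := abs_of_nonneg (by linarith [hx.1])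
    simp only [habs, smul_smul, ← sub_smul]
    congr 1
    field_simp
    ring
  -- left half
  have left : (∫ x in (t-k)..t,
        ((1/12 : ℝ) * ((k - |x - t|) * (2 * (1 - |x - t| / k) ^ 2 - 3))) • u'''' x)
      = (k ^ 2)⁻¹ • J3m - (1/4 : ℝ) • J1m := by
    rw [hJ3m, hJ1m, intervalIntegral.integral_symm (t-k) t,
      intervalIntegral.integral_symm (t-k) t, smul_neg, smul_neg, sub_neg_eq_add,
      neg_add_eq_sub, ← intervalIntegral.integral_smul, ← intervalIntegral.integral_smul,
      ← intervalIntegral.integral_sub h1m h3m]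
    apply intervalIntegral.integral_congr
    intro x hx
    rw [Set.uIcc_of_le (by linarith : t - k ≤ t)] at hx
    have habs : |x - t| = -(x - t) := abs_of_nonpos (by linarith [hx.2])
    simp only [habs, smul_smul, ← sub_smul]
    congr 1
    field_simp
    ring
  -- change of variables
  have cov : (∫ x in (t-k)..(t+k),
        ((1/12 : ℝ) * ((k - |x - t|) * (2 * (1 - |x - t| / k) ^ 2 - 3))) • u'''' x)
      = (1/12 : ℝ) • ∫ s in (-k)..k,
          ((k - |s|) * (2 * (1 - |s| / k) ^ 2 - 3)) • u'''' (t + s) := by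
    rw [← intervalIntegral.integral_smul]
    have := intervalIntegral.integral_comp_sub_right
      (fun s => (1/12 : ℝ) • (((k - |s|) * (2 * (1 - |s| / k) ^ 2 - 3)) • u'''' (t + s))) t
      (a := t - k) (b := t + k)
    simp only [add_sub_cancel_left] at this
    rw [show t - k - t = -k by ring] at this
    rw [← this]
    apply intervalIntegral.integral_congr
    intro x _
    simp only [add_sub_cancel, smul_smul]
  -- splitting
  have split : (∫ x in (t-k)..t,
        ((1/12 : ℝ) * ((k - |x - t|) * (2 * (1 - |x - t| / k) ^ 2 - 3))) • u'''' x)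
      + (∫ x in t..(t+k),
        ((1/12 : ℝ) * ((k - |x - t|) * (2 * (1 - |x - t| / k) ^ 2 - 3))) • u'''' x)
      = ∫ x in (t-k)..(t+k),
        ((1/12 : ℝ) * ((k - |x - t|) * (2 * (1 - |x - t| / k) ^ 2 - 3))) • u'''' x :=
    intervalIntegral.integral_add_adjacent_intervals hWintm hWintp
  have key : (1/12 : ℝ) •
        (∫ s in (-k)..k, ((k - |s|) * (2 * (1 - |s| / k) ^ 2 - 3)) • u'''' (t + s))
      = ((k ^ 2)⁻¹ • J3p - (1/4 : ℝ) • J1p) + ((k ^ 2)⁻¹ • J3m - (1/4 : ℝ) • J1m) := by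
    rw [← cov, ← split, right, left]; abel
  rw [e3p, e3m, e1p, e1m, key]
  match_scalars <;> field_simp <;> ring
end

section
/- Let E be a real Banach space, let k > 0, t ∈ ℝ, and let u : ℝ → E be four times continuously differentiable on [t−k, t+k]. Then ‖(u(t+k) − 2u(t) + u(t−k))/k² − (u''(t+k) + 2u''(t) + u''(t−k))/4‖² ≤ (41/2520) k³ ∫_{t−k}^{t+k} ‖u''''(s)‖² ds. -/
/-!
Taylor's formula with integral remainder around `t`, to order three for `u` and to order one
for `u''`, writes the truncation error as `∫ₜ^{t+k} K_k(t+k-s) u''''(s) ds + ∫ₜ^{t-k} K_{-k}(t-k-s)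
u''''(s) ds` with the Peano kernel `K_h(x) = x³/(6h²) - x/4`: the terms in `u'` and `u'''` of the
two expansions cancel. Cauchy–Schwarz on each half, with `∫₀^h K_h² = 41 h³/5040`, and
`(a + b)² ≤ 2 (a² + b²)` give the constant `41/2520`.
-/

open Set MeasureTheory
open scoped Interval Nat

theorem integral_mul_sq_le_integral_sq_mul_integral_sq {α : Type*} [MeasurableSpace α]
    {μ : Measure α} {f g : α → ℝ} (hf : Integrable (fun x => f x ^ 2) μ)
    (hg : Integrable (fun x => g x ^ 2) μ) (hfg : Integrable (fun x => f x * g x) μ) :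
    (∫ x, f x * g x ∂μ) ^ 2 ≤ (∫ x, f x ^ 2 ∂μ) * ∫ x, g x ^ 2 ∂μ := by
  have hquad : ∀ c : ℝ, 0 ≤ (∫ x, f x ^ 2 ∂μ) * (c * c) + 2 * (∫ x, f x * g x ∂μ) * c
      + ∫ x, g x ^ 2 ∂μ := by
    intro c
    have hexpand : (fun x => (c * f x + g x) ^ 2)
        = fun x => c * c * f x ^ 2 + 2 * c * (f x * g x) + g x ^ 2 := by
      funext x; ring
    have hfst : Integrable (fun x => c * c * f x ^ 2 + 2 * c * (f x * g x)) μ :=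
      (hf.const_mul _).add (hfg.const_mul _)
    have hnonneg : 0 ≤ ∫ x, (c * f x + g x) ^ 2 ∂μ := integral_nonneg fun x => sq_nonneg _
    rw [hexpand, integral_add hfst hg, integral_add (hf.const_mul _) (hfg.const_mul _),
      integral_const_mul, integral_const_mul] at hnonneg
    linarith
  have hdisc := discrim_le_zero hquad
  rw [discrim] at hdisc
  linarith

section

variable {E : Type*} [NormedAddCommGroup E] [NormedSpace ℝ E]

theorem norm_intervalIntegral_smul_sq_le {w : ℝ → ℝ} {f : ℝ → E} {a b : ℝ}
    (hw : ContinuousOn w [[a, b]]) (hf : ContinuousOn f [[a, b]]) :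
    ‖∫ s in a..b, w s • f s‖ ^ 2 ≤ (∫ s in a..b, w s ^ 2) * ∫ s in a..b, ‖f s‖ ^ 2 := by
  wlog hab : a ≤ b generalizing a b
  · rw [uIcc_comm] at hw hf
    simpa only [intervalIntegral.integral_symm b a, norm_neg, neg_mul_neg] using
      this hw hf (le_of_not_ge hab)
  have hint {g : ℝ → ℝ} (hg : ContinuousOn g [[a, b]]) : IntegrableOn g (Ioc a b) :=
    (hg.intervalIntegrable (μ := volume)).1
  simp only [intervalIntegral.integral_of_le hab]
  calc ‖∫ s in Ioc a b, w s • f s‖ ^ 2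
      ≤ (∫ s in Ioc a b, |w s| * ‖f s‖) ^ 2 := by
        gcongr
        simpa only [norm_smul, Real.norm_eq_abs] using
          norm_integral_le_integral_norm fun s => w s • f s
    _ ≤ (∫ s in Ioc a b, |w s| ^ 2) * ∫ s in Ioc a b, ‖f s‖ ^ 2 :=
        integral_mul_sq_le_integral_sq_mul_integral_sq (hint (hw.abs.pow 2))
          (hint (hf.norm.pow 2)) (hint (hw.abs.mul hf.norm))
    _ = (∫ s in Ioc a b, w s ^ 2) * ∫ s in Ioc a b, ‖f s‖ ^ 2 := by simp only [sq_abs]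

noncomputable def peanoKernel (h x : ℝ) : ℝ := x ^ 3 / (6 * h ^ 2) - x / 4

noncomputable def peanoRemainder (f : ℝ → E) (t h : ℝ) : E :=
  ∫ s in t..t + h, peanoKernel h (t + h - s) • f s

theorem integral_peanoKernel_sq (h : ℝ) :
    ∫ x in 0..h, peanoKernel h x ^ 2 = 41 / 5040 * h ^ 3 := by
  have hexpand : ∀ x, peanoKernel h x ^ 2
      = (36 * h ^ 4)⁻¹ * x ^ 6 - (12 * h ^ 2)⁻¹ * x ^ 4 + 16⁻¹ * x ^ 2 := by
    intro x; unfold peanoKernel; ring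
  simp only [hexpand]
  rw [intervalIntegral.integral_add (by apply Continuous.intervalIntegrable; fun_prop)
      (by apply Continuous.intervalIntegrable; fun_prop),
    intervalIntegral.integral_sub (by apply Continuous.intervalIntegrable; fun_prop)
      (by apply Continuous.intervalIntegrable; fun_prop)]
  simp only [intervalIntegral.integral_const_mul, integral_pow]
  rcases eq_or_ne h 0 with rfl | hh
  · simp
  · field_simp
    ring

theorem norm_peanoRemainder_sq_le {f : ℝ → E} {t h : ℝ} (hf : ContinuousOn f [[t, t + h]]) :
    ‖peanoRemainder f t h‖ ^ 2 ≤ 41 / 5040 * h ^ 3 * ∫ s in t..t + h, ‖f s‖ ^ 2 := by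
  have hkernel : ∫ s in t..t + h, peanoKernel h (t + h - s) ^ 2 = 41 / 5040 * h ^ 3 := by
    rw [intervalIntegral.integral_comp_sub_left (fun s => peanoKernel h s ^ 2)]
    simpa using integral_peanoKernel_sq h
  rw [← hkernel]
  exact norm_intervalIntegral_smul_sq_le (by unfold peanoKernel; fun_prop) hf

theorem uIcc_add_subset_Icc {t h k : ℝ} (hh : |h| ≤ k) :
    [[t, t + h]] ⊆ Icc (t - k) (t + k) := by
  obtain ⟨hlo, hhi⟩ := abs_le.mp hh
  exact uIcc_subset_Icc ⟨by linarith, by linarith⟩ ⟨by linarith, by linarith⟩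

theorem norm_peanoRemainder_add_sq_le {f : ℝ → E} {t k : ℝ} (hk : 0 ≤ k)
    (hf : ContinuousOn f (Icc (t - k) (t + k))) :
    ‖peanoRemainder f t k + peanoRemainder f t (-k)‖ ^ 2
      ≤ 41 / 2520 * k ^ 3 * ∫ s in t - k..t + k, ‖f s‖ ^ 2 := by
  have hsub : [[t, t + k]] ⊆ Icc (t - k) (t + k) := uIcc_add_subset_Icc (abs_of_nonneg hk).le
  have hsub' : [[t, t + -k]] ⊆ Icc (t - k) (t + k) :=
    uIcc_add_subset_Icc (by rw [abs_neg, abs_of_nonneg hk])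
  have hsq {h : ℝ} (hsub : [[t, t + h]] ⊆ Icc (t - k) (t + k)) :
      IntervalIntegrable (fun s => ‖f s‖ ^ 2) volume t (t + h) :=
    ((hf.norm.pow 2).mono hsub).intervalIntegrable
  calc ‖peanoRemainder f t k + peanoRemainder f t (-k)‖ ^ 2
      ≤ 2 * (‖peanoRemainder f t k‖ ^ 2 + ‖peanoRemainder f t (-k)‖ ^ 2) :=
        (pow_le_pow_left₀ (norm_nonneg _) (norm_add_le _ _) 2).trans add_sq_le
    _ ≤ 2 * (41 / 5040 * k ^ 3 * (∫ s in t..t + k, ‖f s‖ ^ 2)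
          + 41 / 5040 * (-k) ^ 3 * ∫ s in t..t + -k, ‖f s‖ ^ 2) := by
        gcongr
        exacts [norm_peanoRemainder_sq_le (hf.mono hsub),
          norm_peanoRemainder_sq_le (hf.mono hsub')]
    _ = 41 / 2520 * k ^ 3
          * ((∫ s in t + -k..t, ‖f s‖ ^ 2) + ∫ s in t..t + k, ‖f s‖ ^ 2) := by
        rw [intervalIntegral.integral_symm t]
        ring
    _ = 41 / 2520 * k ^ 3 * ∫ s in t - k..t + k, ‖f s‖ ^ 2 := by
        rw [intervalIntegral.integral_add_adjacent_intervals (hsq hsub').symm (hsq hsub),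
          sub_eq_add_neg]

theorem eqOn_iteratedDerivWithin_of_hasDerivWithinAt {D : ℕ → ℝ → E} {s : Set ℝ} {n : ℕ}
    (hs : UniqueDiffOn ℝ s) (hD : ∀ i < n, ∀ z ∈ s, HasDerivWithinAt (D i) (D (i + 1) z) s z) :
    ∀ i ≤ n, EqOn (iteratedDerivWithin i (D 0) s) (D i) s := by
  intro i hi
  induction i with
  | zero => simp [EqOn]
  | succ i ih =>
    intro z hz
    rw [iteratedDerivWithin_succ, derivWithin_congr (ih (by omega)) (ih (by omega) hz)]
    exact (hD i (by omega) z hz).derivWithin (hs z hz)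

variable [CompleteSpace E]

theorem taylor_integral_remainder_of_hasDerivWithinAt (D : ℕ → ℝ → E) {x y : ℝ} (n : ℕ)
    (hD : ∀ i ≤ n, ∀ s ∈ [[x, y]], HasDerivWithinAt (D i) (D (i + 1) s) [[x, y]] s)
    (hcont : ContinuousOn (D (n + 1)) [[x, y]]) :
    ∫ s in x..y, ((y - s) ^ n / n !) • D (n + 1) s
      = D 0 y - ∑ i ∈ Finset.range (n + 1), ((i ! : ℝ)⁻¹ * (y - x) ^ i) • D i x := by
  rcases eq_or_ne x y with rfl | hxy
  · simp [Finset.sum_range_succ']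
  have heq := eqOn_iteratedDerivWithin_of_hasDerivWithinAt (uniqueDiffOn_uIcc hxy)
    (n := n + 1) fun i hi => hD i (by omega)
  have hdiff : ∀ i ≤ n, DifferentiableOn ℝ (D i) [[x, y]] :=
    fun i hi z hz => (hD i hi z hz).differentiableWithinAt
  have hcontD : ∀ i ≤ n + 1, ContinuousOn (D i) [[x, y]] := by
    intro i hi
    rcases hi.lt_or_eq with hi | rfl
    exacts [(hdiff i (by omega)).continuousOn, hcont]
  have hsmooth : ContDiffOn ℝ (n + 1 : ℕ) (D 0) [[x, y]] := by
    refine contDiffOn_of_continuousOn_differentiableOn_deriv (fun m hm => ?_) (fun m hm => ?_)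
    · have hm' : m ≤ n + 1 := by exact_mod_cast hm
      exact (hcontD m hm').congr (heq m hm')
    · have hm' : m < n + 1 := by exact_mod_cast hm
      exact (hdiff m (by omega)).congr (heq m hm'.le)
  have htaylor := taylor_integral_remainder hsmooth
  have hintegrand :
      EqOn (fun s => ((y - s) ^ n / n !) • iteratedDerivWithin (n + 1) (D 0) [[x, y]] s)
        (fun s => ((y - s) ^ n / n !) • D (n + 1) s) [[x, y]] :=
    fun s hs => by simp only [heq (n + 1) le_rfl hs]
  rw [taylor_within_apply, intervalIntegral.integral_congr hintegrand] at htaylor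
  rw [← htaylor]
  congr 1
  refine Finset.sum_congr rfl fun i hi => ?_
  rw [heq i (by simp at hi; omega) left_mem_uIcc]

theorem peanoRemainder_eq (D : ℕ → ℝ → E) {t h : ℝ} {S : Set ℝ} (hS : [[t, t + h]] ⊆ S)
    (hD : ∀ i ≤ 3, ∀ s ∈ S, HasDerivWithinAt (D i) (D (i + 1) s) S s)
    (hcont : ContinuousOn (D 4) S) :
    peanoRemainder (D 4) t h
      = (h ^ 2)⁻¹ • (D 0 (t + h) - D 0 t - h • D 1 t - (h ^ 2 / 2) • D 2 t - (h ^ 3 / 6) • D 3 t)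
        - (1 / 4 : ℝ) • (D 2 (t + h) - D 2 t - h • D 3 t) := by
  have hD' : ∀ i ≤ 3, ∀ s ∈ [[t, t + h]], HasDerivWithinAt (D i) (D (i + 1) s) [[t, t + h]] s :=
    fun i hi s hs => (hD i hi s (hS hs)).mono hS
  have htaylor3 := taylor_integral_remainder_of_hasDerivWithinAt D 3 hD' (hcont.mono hS)
  have htaylor1 := taylor_integral_remainder_of_hasDerivWithinAt (fun i => D (i + 2)) 1
    (fun i hi => hD' (i + 2) (by omega)) (hcont.mono hS)
  norm_num [Finset.sum_range_succ, Nat.factorial] at htaylor3 htaylor1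
  have hsplit : ∀ s, peanoKernel h (t + h - s) • D 4 s
      = (h ^ 2)⁻¹ • (((t + h - s) ^ 3 / 6) • D 4 s) - (1 / 4 : ℝ) • ((t + h - s) • D 4 s) := by
    intro s
    simp only [peanoKernel, smul_smul, ← sub_smul]
    ring_nf
  have hint (c : ℝ) {w : ℝ → ℝ} (hw : Continuous w) :
      IntervalIntegrable (fun s => c • (w s • D 4 s)) volume t (t + h) :=
    ((hcont.mono hS).intervalIntegrable.continuousOn_smul hw.continuousOn).smul c
  rw [peanoRemainder, intervalIntegral.integral_congr fun s _ => hsplit s,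
    intervalIntegral.integral_sub (hint _ (by fun_prop)) (hint _ (by fun_prop)),
    intervalIntegral.integral_smul, intervalIntegral.integral_smul, htaylor3, htaylor1]
  module

theorem truncation_error_eq_peanoRemainder_add (D : ℕ → ℝ → E) {t k : ℝ} (hk : 0 < k)
    (hD : ∀ i ≤ 3, ∀ s ∈ Icc (t - k) (t + k),
      HasDerivWithinAt (D i) (D (i + 1) s) (Icc (t - k) (t + k)) s)
    (hcont : ContinuousOn (D 4) (Icc (t - k) (t + k))) :
    (k ^ 2)⁻¹ • (D 0 (t + k) - (2 : ℝ) • D 0 t + D 0 (t - k))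
        - (1 / 4 : ℝ) • (D 2 (t + k) + (2 : ℝ) • D 2 t + D 2 (t - k))
      = peanoRemainder (D 4) t k + peanoRemainder (D 4) t (-k) := by
  have hsub : [[t, t + k]] ⊆ Icc (t - k) (t + k) := uIcc_add_subset_Icc (abs_of_pos hk).le
  have hsub' : [[t, t + -k]] ⊆ Icc (t - k) (t + k) :=
    uIcc_add_subset_Icc (by rw [abs_neg, abs_of_pos hk])
  rw [peanoRemainder_eq D hsub hD hcont, peanoRemainder_eq D hsub' hD hcont, ← sub_eq_add_neg]
  have hk0 := hk.ne'
  match_scalars <;> field_simp <;> ring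

end

/-- Bound on the truncation error `rⁿ` of the implicit scheme. -/
theorem truncation_error_implicit_bound
    {E : Type*} [NormedAddCommGroup E] [NormedSpace ℝ E] [CompleteSpace E]
    (k t : ℝ) (hk : 0 < k) (u u' u'' u''' u'''' : ℝ → E)
    (hu' : ∀ s ∈ Set.Icc (t - k) (t + k),
      HasDerivWithinAt u (u' s) (Set.Icc (t - k) (t + k)) s)
    (hu'' : ∀ s ∈ Set.Icc (t - k) (t + k),
      HasDerivWithinAt u' (u'' s) (Set.Icc (t - k) (t + k)) s)
    (hu''' : ∀ s ∈ Set.Icc (t - k) (t + k),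
      HasDerivWithinAt u'' (u''' s) (Set.Icc (t - k) (t + k)) s)
    (hu'''' : ∀ s ∈ Set.Icc (t - k) (t + k),
      HasDerivWithinAt u''' (u'''' s) (Set.Icc (t - k) (t + k)) s)
    (hcont : ContinuousOn u'''' (Set.Icc (t - k) (t + k))) :
    ‖(k ^ 2)⁻¹ • (u (t + k) - (2 : ℝ) • u t + u (t - k))
        - (1 / 4 : ℝ) • (u'' (t + k) + (2 : ℝ) • u'' t + u'' (t - k))‖ ^ 2
      ≤ (41 / 2520) * k ^ 3 * ∫ s in (t - k)..(t + k), ‖u'''' s‖ ^ 2 := by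
  let D : ℕ → ℝ → E := fun i => [u, u', u'', u''', u''''].getD i 0
  have hD : ∀ i ≤ 3, ∀ s ∈ Icc (t - k) (t + k),
      HasDerivWithinAt (D i) (D (i + 1) s) (Icc (t - k) (t + k)) s := by
    intro i hi
    interval_cases i
    exacts [hu', hu'', hu''', hu'''']
  calc _ = ‖peanoRemainder u'''' t k + peanoRemainder u'''' t (-k)‖ ^ 2 :=
        congrArg (‖·‖ ^ 2) (truncation_error_eq_peanoRemainder_add D hk hD hcont)
    _ ≤ _ := norm_peanoRemainder_add_sq_le hk.le hcont
end

section
/- In the abstract FEM setting, let T > 0, let f : [0,T] → H be continuous, and let u_h : [0,T] → V be twice continuously differentiable with (u_h''(t), v) + a_h(u_h(t), v) = (f(t), v) for all v ∈ V and all t ∈ [0,T]. Then for every t ∈ [0,T]: ‖u_h'(t)‖² + α ‖u_h(t)‖_h² ≤ e^T · ( ‖u_h'(0)‖² + β ‖u_h(0)‖_h² + ∫₀ᵀ ‖f(s)‖² ds ). -/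
open scoped RealInnerProductSpace

/-!
With the discrete energy `E = ‖u_h'‖² + a_h(u_h, u_h)`, testing the scheme with
`v = u_h'` gives `E' = 2 (f, u_h') ≤ ‖f‖² + ‖u_h'‖² ≤ ‖f‖² + E`, because `a_h(u_h, u_h) ≥ 0` by
coercivity. Gronwall's inequality then yields `E(t) ≤ e^t (E(0) + ∫₀ᵗ ‖f‖²)`, and coercivity and
boundedness of `a_h` compare `E(t)` and `E(0)` with the two sides of the estimate.
-/

open Set Filter Topology Real

theorem le_exp_mul_add_integral_of_deriv_le_add {E E' φ : ℝ → ℝ} {a b : ℝ}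
    (hE : ContinuousOn E (Icc a b)) (hE' : ∀ x ∈ Ioo a b, HasDerivAt E (E' x) x)
    (hφ : ContinuousOn φ (Icc a b)) (hφ₀ : ∀ x ∈ Ioo a b, 0 ≤ φ x)
    (hbound : ∀ x ∈ Ioo a b, E' x ≤ E x + φ x) {t : ℝ} (ht : t ∈ Icc a b) :
    E t ≤ exp (t - a) * (E a + ∫ s in a..t, φ s) := by
  have hab : a ≤ b := ht.1.trans ht.2
  set F : ℝ → ℝ := fun x => ∫ s in a..x, φ s
  have hF : ContinuousOn F (Icc a b) := by
    have := intervalIntegral.continuousOn_primitive_interval (μ := MeasureTheory.volume)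
      (f := φ) (a := a) (b := b) (by rw [uIcc_of_le hab]; exact hφ.integrableOn_Icc)
    rwa [uIcc_of_le hab] at this
  have hF' : ∀ x ∈ Ioo a b, HasDerivAt F (φ x) x := fun x hx =>
    intervalIntegral.integral_hasDerivAt_right
      ((hφ.mono (Icc_subset_Icc le_rfl hx.2.le)).intervalIntegrable_of_Icc hx.1.le)
      ((hφ.mono Ioo_subset_Icc_self).stronglyMeasurableAtFilter isOpen_Ioo x hx)
      (hφ.continuousAt (Icc_mem_nhds hx.1 hx.2))
  -- `x ↦ e^{a-x} E(x) - ∫ₐˣ φ` is antitone: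
  -- its derivative is `e^{a-x} (E' - E) - φ ≤ (e^{a-x} - 1) φ ≤ 0`.
  have hanti : AntitoneOn (fun x => exp (a - x) * E x - F x) (Icc a b) := by
    refine antitoneOn_of_hasDerivWithinAt_nonpos (convex_Icc a b)
      (((continuous_const.sub continuous_id).rexp.continuousOn.mul hE).sub hF)
      (f' := fun x => exp (a - x) * (-1) * E x + exp (a - x) * E' x - φ x) ?_ ?_
    · intro x hx
      rw [interior_Icc] at hx ⊢
      exact ((((hasDerivAt_id x).const_sub a).exp.mul (hE' x hx)).sub (hF' x hx)).hasDerivWithinAt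
    · intro x hx
      rw [interior_Icc] at hx
      have hexp : exp (a - x) ≤ 1 := exp_le_one_iff.mpr (by linarith [hx.1])
      nlinarith [hbound x hx, hφ₀ x hx, exp_pos (a - x)]
  have key := hanti (left_mem_Icc.mpr hab) ht ht.1
  simp only [sub_self, exp_zero, one_mul, F, intervalIntegral.integral_same, sub_zero] at key
  calc E t = exp (t - a) * (exp (a - t) * E t) := by
        rw [← mul_assoc, ← exp_add]; simp
    _ ≤ exp (t - a) * (E a + F t) := by gcongr; linarith

section Energy

variable {H : Type*} [NormedAddCommGroup H] [InnerProductSpace ℝ H] {V : Submodule ℝ H}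
  {a : V →ₗ[ℝ] V →ₗ[ℝ] ℝ}

/-- `a` need not be continuous on `V`; the representation `a (u x) = ⟪g x, ·⟫` by a continuous `g`
takes its place, through `a (u x) (u x) - a (u τ) (u τ) = ⟪g x + g τ, u x - u τ⟫`. -/
theorem hasDerivWithinAt_apply_self_of_eq_inner (hsym : ∀ w v : V, a w v = a v w)
    {u : ℝ → V} {u' : V} {g : ℝ → H} {s : Set ℝ} {τ : ℝ} (hτ : τ ∈ s)
    (hu : HasDerivWithinAt u u' s τ) (hg : ContinuousWithinAt g s τ)
    (hag : ∀ x ∈ s, ∀ v : V, a (u x) v = ⟪g x, (v : H)⟫) :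
    HasDerivWithinAt (fun x => a (u x) (u x)) (2 * ⟪g τ, (u' : H)⟫) s τ := by
  rw [hasDerivWithinAt_iff_tendsto_slope] at hu ⊢
  have hlim : Tendsto (fun x => ⟪g x + g τ, ((slope u τ x : V) : H)⟫) (𝓝[s \ {τ}] τ)
      (𝓝 ⟪g τ + g τ, (u' : H)⟫) :=
    ((hg.mono sdiff_subset).tendsto.add tendsto_const_nhds).inner
      ((continuous_subtype_val.tendsto u').comp hu)
  rw [inner_add_left, ← two_mul] at hlim
  refine hlim.congr' (eventually_nhdsWithin_of_forall fun x hx => ?_)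
  rw [slope_def_module, slope_def_module, Submodule.coe_smul, real_inner_smul_right,
    smul_eq_mul, inner_add_left, ← hag x hx.1, ← hag τ hτ, map_sub, map_sub, hsym (u τ) (u x)]
  ring

noncomputable def energy (a : V →ₗ[ℝ] V →ₗ[ℝ] ℝ) (u u' : ℝ → V) (t : ℝ) : ℝ :=
  ‖u' t‖ ^ 2 + a (u t) (u t)

theorem hasDerivWithinAt_energy (hsym : ∀ w v : V, a w v = a v w) {f : ℝ → H}
    {u u' u'' : ℝ → V} {s : Set ℝ} {τ : ℝ} (hτ : τ ∈ s)
    (hu : HasDerivWithinAt u (u' τ) s τ) (hu' : HasDerivWithinAt u' (u'' τ) s τ)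
    (hf : ContinuousWithinAt f s τ) (hu'' : ContinuousWithinAt u'' s τ)
    (heq : ∀ x ∈ s, ∀ v : V, ⟪((u'' x : V) : H), (v : H)⟫ + a (u x) v = ⟪f x, (v : H)⟫) :
    HasDerivWithinAt (energy a u u') (2 * ⟪f τ, (u' τ : H)⟫) s τ := by
  have hform := hasDerivWithinAt_apply_self_of_eq_inner (g := fun x => f x - u'' x) hsym hτ hu
    (hf.sub (continuous_subtype_val.continuousAt.comp_continuousWithinAt hu''))
    fun x hx v => by rw [inner_sub_left, ← heq x hx v]; ring
  refine (hu'.norm_sq.add hform).congr_deriv ?_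
  rw [Submodule.coe_inner, inner_sub_left, real_inner_comm]
  ring

theorem two_mul_inner_le_energy_add_sq_norm (hpos : ∀ w : V, 0 ≤ a w w) (f : H) (u u' : ℝ → V)
    (t : ℝ) : 2 * ⟪f, (u' t : H)⟫ ≤ energy a u u' t + ‖f‖ ^ 2 := by
  have hnorm : ‖(u' t : H)‖ = ‖u' t‖ := rfl
  have := real_inner_le_norm f (u' t : H)
  rw [hnorm] at this
  unfold energy
  nlinarith [hpos (u t), sq_nonneg (‖f‖ - ‖u' t‖)]

theorem energy_nonneg (hpos : ∀ w : V, 0 ≤ a w w) (u u' : ℝ → V) (t : ℝ) :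
    0 ≤ energy a u u' t :=
  add_nonneg (sq_nonneg _) (hpos (u t))

theorem energy_le {N : Seminorm ℝ V} {β : ℝ} (hbdd : ∀ w v : V, |a w v| ≤ β * N w * N v)
    (u u' : ℝ → V) (t : ℝ) : energy a u u' t ≤ ‖u' t‖ ^ 2 + β * N (u t) ^ 2 := by
  have := (le_abs_self _).trans (hbdd (u t) (u t))
  unfold energy
  nlinarith

end Energy

theorem semidiscrete_stability_general
    {H : Type*} [NormedAddCommGroup H] [InnerProductSpace ℝ H]
    (V : Submodule ℝ H) (Nh : Seminorm ℝ V) (a : V →ₗ[ℝ] V →ₗ[ℝ] ℝ)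
    (α β T : ℝ) (hα : 0 < α)
    (hsym : ∀ w v : V, a w v = a v w)
    (hell : ∀ w : V, α * Nh w ^ 2 ≤ a w w)
    (hbdd : ∀ w v : V, |a w v| ≤ β * Nh w * Nh v)
    (f : ℝ → H) (hf : ContinuousOn f (Set.Icc (0 : ℝ) T))
    (u u' u'' : ℝ → V)
    (hu' : ∀ t ∈ Set.Icc (0 : ℝ) T, HasDerivWithinAt u (u' t) (Set.Icc (0 : ℝ) T) t)
    (hu'' : ∀ t ∈ Set.Icc (0 : ℝ) T, HasDerivWithinAt u' (u'' t) (Set.Icc (0 : ℝ) T) t)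
    (hcont : ContinuousOn u'' (Set.Icc (0 : ℝ) T))
    (heq : ∀ t ∈ Set.Icc (0 : ℝ) T, ∀ v : V,
      ⟪((u'' t : V) : H), (v : H)⟫ + a (u t) v = ⟪f t, (v : H)⟫) :
    ∀ t ∈ Set.Icc (0 : ℝ) T,
      ‖u' t‖ ^ 2 + α * Nh (u t) ^ 2
        ≤ Real.exp T * (‖u' 0‖ ^ 2 + β * Nh (u 0) ^ 2 + ∫ s in (0 : ℝ)..T, ‖f s‖ ^ 2) := by
  intro t ht
  have hpos : ∀ w : V, 0 ≤ a w w := fun w => (by positivity : 0 ≤ α * Nh w ^ 2).trans (hell w)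
  have hE : ∀ τ ∈ Icc 0 T, HasDerivWithinAt (energy a u u') (2 * ⟪f τ, (u' τ : H)⟫) (Icc 0 T) τ :=
    fun τ hτ => hasDerivWithinAt_energy hsym hτ (hu' τ hτ) (hu'' τ hτ) (hf τ hτ) (hcont τ hτ) heq
  have hf2 : ContinuousOn (fun s => ‖f s‖ ^ 2) (Icc 0 T) := hf.norm.pow 2
  have hgronwall := le_exp_mul_add_integral_of_deriv_le_add
    (fun τ hτ => (hE τ hτ).continuousWithinAt)
    (fun τ hτ => (hE τ (Ioo_subset_Icc_self hτ)).hasDerivAt (Icc_mem_nhds hτ.1 hτ.2)) hf2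
    (fun _ _ => sq_nonneg _)
    (fun τ _ => two_mul_inner_le_energy_add_sq_norm hpos (f τ) u u' τ) ht
  have hint : ∫ s in (0 : ℝ)..t, ‖f s‖ ^ 2 ≤ ∫ s in (0 : ℝ)..T, ‖f s‖ ^ 2 :=
    intervalIntegral.integral_mono_interval le_rfl ht.1 ht.2
      (Eventually.of_forall fun _ => sq_nonneg _) (hf2.intervalIntegrable_of_Icc (ht.1.trans ht.2))
  calc ‖u' t‖ ^ 2 + α * Nh (u t) ^ 2 ≤ energy a u u' t := add_le_add le_rfl (hell (u t))
    _ ≤ exp t * (energy a u u' 0 + ∫ s in (0 : ℝ)..t, ‖f s‖ ^ 2) := by simpa using hgronwall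
    _ ≤ exp T * (‖u' 0‖ ^ 2 + β * Nh (u 0) ^ 2 + ∫ s in (0 : ℝ)..T, ‖f s‖ ^ 2) := by
      gcongr
      · exact add_nonneg (energy_nonneg hpos u u' 0)
          (intervalIntegral.integral_nonneg ht.1 fun _ _ => sq_nonneg _)
      · exact ht.2
      · exact energy_le hbdd u u' 0

/-- Stability of the semidiscrete scheme in the abstract FEM setting. -/
theorem semidiscrete_stability
    {H : Type*} [NormedAddCommGroup H] [InnerProductSpace ℝ H] [CompleteSpace H]
    (V : Submodule ℝ H) (Nh : Seminorm ℝ V) (a : V →ₗ[ℝ] V →ₗ[ℝ] ℝ)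
    (α β T : ℝ) (hα : 0 < α) (hαβ : α ≤ β) (hT : 0 < T)
    (hsym : ∀ w v : V, a w v = a v w)
    (hell : ∀ w : V, α * Nh w ^ 2 ≤ a w w)
    (hbdd : ∀ w v : V, |a w v| ≤ β * Nh w * Nh v)
    (f : ℝ → H) (hf : ContinuousOn f (Set.Icc (0 : ℝ) T))
    (u u' u'' : ℝ → V)
    (hu' : ∀ t ∈ Set.Icc (0 : ℝ) T, HasDerivWithinAt u (u' t) (Set.Icc (0 : ℝ) T) t)
    (hu'' : ∀ t ∈ Set.Icc (0 : ℝ) T, HasDerivWithinAt u' (u'' t) (Set.Icc (0 : ℝ) T) t)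
    (hcont : ContinuousOn u'' (Set.Icc (0 : ℝ) T))
    (heq : ∀ t ∈ Set.Icc (0 : ℝ) T, ∀ v : V,
      ⟪((u'' t : V) : H), (v : H)⟫ + a (u t) v = ⟪f t, (v : H)⟫) :
    ∀ t ∈ Set.Icc (0 : ℝ) T,
      ‖u' t‖ ^ 2 + α * Nh (u t) ^ 2
        ≤ Real.exp T * (‖u' 0‖ ^ 2 + β * Nh (u 0) ^ 2 + ∫ s in (0 : ℝ)..T, ‖f s‖ ^ 2) :=
  semidiscrete_stability_general V Nh a α β T hα hsym hell hbdd f hf u u' u'' hu' hu'' hcont heq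
end

section
/- For every choice of constants 0 < α ≤ β and T > 0 there exists a constant C > 0 with the following property. For every abstract FEM setting (H, V, ‖·‖_h, a_h) with constants α, β, every h > 0 and C_inv > 0 satisfying the inverse inequality ‖v‖_h ≤ C_inv h⁻² ‖v‖ for all v ∈ V, every N ∈ ℕ with N ≥ 2 and time step k := T/N satisfying the CFL condition k ≤ β^{−1/2} C_inv^{−1} h², every f¹, …, f^{N−1} ∈ H, and every U⁰, …, Uᴺ ∈ V satisfying the explicit scheme ((U^{n+1} − 2Uⁿ + U^{n−1})/k², v) + a_h(Uⁿ, v) = (fⁿ, v) for all v ∈ V and n = 1, …, N−1, one has for every 1 ≤ m ≤ N−1: ‖(U^{m+1} − U^m)/k‖ + ‖(U^{m+1} + U^m)/2‖_h ≤ C ( ‖(U¹ − U⁰)/k‖ + ‖(U¹ + U⁰)/2‖_h + max_{1 ≤ n ≤ N−1} ‖fⁿ‖ ). -/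
open scoped RealInnerProductSpace

/-! With `δₙ = (Uⁿ⁺¹ - Uⁿ)/k` and `σₙ = (Uⁿ⁺¹ + Uⁿ)/2`, testing the scheme with
`Uⁿ⁺¹ - Uⁿ⁻¹ = k (δₙ + δₙ₋₁)` shows that the modified energy
`Eₙ = ‖δₙ‖² + a(σₙ, σₙ) - k²/4 · a(δₙ, δₙ)` changes only by the work `(fⁿ, Uⁿ⁺¹ - Uⁿ⁻¹)` of the load.
The CFL condition and the inverse inequality give `k² a(w, w) ≤ ‖w‖²`, hence
`Eₙ ≥ ¾‖δₙ‖² + α‖σₙ‖ₕ²`. With `F = maxₙ ‖fⁿ‖` the work is then at most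
`√2 k F (√Eₙ + √Eₙ₋₁)`, so
`√Eₙ ≤ √Eₙ₋₁ + √2 k F`, and over `m ≤ N` steps `√E` grows by at most `√2 T F`. -/

theorem le_add_of_sq_le_sq_add_mul_add {x y c : ℝ} (hx : 0 ≤ x) (hc : 0 ≤ c)
    (h : y ^ 2 ≤ x ^ 2 + c * (y + x)) : y ≤ x + c := by
  nlinarith

theorem norm_sub_le_mul_add_norm_inv_smul {E : Type*} [NormedAddCommGroup E] [NormedSpace ℝ E]
    {k : ℝ} (hk : 0 < k) (p q r : E) :
    ‖r - p‖ ≤ k * (‖k⁻¹ • (r - q)‖ + ‖k⁻¹ • (q - p)‖) := by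
  have hrp : r - p = k • (k⁻¹ • (r - q) + k⁻¹ • (q - p)) := by
    rw [smul_add, smul_inv_smul₀ hk.ne', smul_inv_smul₀ hk.ne']; abel
  rw [hrp, norm_smul, Real.norm_of_nonneg hk.le]
  exact mul_le_mul_of_nonneg_left (norm_add_le _ _) hk.le

namespace ExplicitScheme

section

variable {E : Type*} [NormedAddCommGroup E] [InnerProductSpace ℝ E]

noncomputable def discreteEnergy (a : E →ₗ[ℝ] E →ₗ[ℝ] ℝ) (k : ℝ) (p q : E) : ℝ :=
  ‖k⁻¹ • (q - p)‖ ^ 2 + a ((1 / 2 : ℝ) • (q + p)) ((1 / 2 : ℝ) • (q + p))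
    - k ^ 2 / 4 * a (k⁻¹ • (q - p)) (k⁻¹ • (q - p))

variable {a : E →ₗ[ℝ] E →ₗ[ℝ] ℝ} {Nh : Seminorm ℝ E} {α β k : ℝ}

theorem discreteEnergy_sub (hsymm : ∀ w v, a w v = a v w) (hk : k ≠ 0) (p q r : E) :
    discreteEnergy a k q r - discreteEnergy a k p q
      = ⟪(k ^ 2)⁻¹ • (r - (2 : ℝ) • q + p), r - p⟫ + a q (r - p) := by
  have hdiff : r - (2 : ℝ) • q + p = (r - q) - (q - p) := by module
  have hsum : r - p = (r - q) + (q - p) := by abel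
  rw [discreteEnergy, discreteEnergy, hdiff, hsum, real_inner_smul_left, inner_sub_left,
    inner_add_right, inner_add_right, real_inner_comm (q - p) (r - q),
    real_inner_self_eq_norm_sq, real_inner_self_eq_norm_sq, norm_smul, norm_smul,
    Real.norm_eq_abs, mul_pow, mul_pow, sq_abs]
  simp only [map_add, map_sub, map_smul, LinearMap.add_apply, LinearMap.sub_apply,
    LinearMap.smul_apply, smul_eq_mul]
  rw [hsymm p q, hsymm r q]
  field_simp
  ring

theorem sq_mul_apply_self_le_norm_sq (hbound : ∀ w, a w w ≤ β * Nh w ^ 2) (hβ : 0 ≤ β) {c : ℝ}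
    (hinv : ∀ w, Nh w ≤ c * ‖w‖) (hk : 0 ≤ k) (hcfl : k * √β * c ≤ 1) (w : E) :
    k ^ 2 * a w w ≤ ‖w‖ ^ 2 :=
  calc k ^ 2 * a w w ≤ (k * √β * Nh w) ^ 2 := by
        rw [mul_pow, mul_pow, Real.sq_sqrt hβ, mul_assoc]
        exact mul_le_mul_of_nonneg_left (hbound w) (sq_nonneg k)
    _ ≤ ‖w‖ ^ 2 := by
        have hkβ : 0 ≤ k * √β := by positivity
        gcongr
        calc k * √β * Nh w ≤ k * √β * (c * ‖w‖) := mul_le_mul_of_nonneg_left (hinv w) hkβ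
          _ = (k * √β * c) * ‖w‖ := by ring
          _ ≤ ‖w‖ := mul_le_of_le_one_left (norm_nonneg w) hcfl

theorem discreteEnergy_lower (hcoer : ∀ w, α * Nh w ^ 2 ≤ a w w)
    (hcfl : ∀ w, k ^ 2 * a w w ≤ ‖w‖ ^ 2) (p q : E) :
    3 / 4 * ‖k⁻¹ • (q - p)‖ ^ 2 + α * Nh ((1 / 2 : ℝ) • (q + p)) ^ 2
      ≤ discreteEnergy a k p q := by
  have := hcoer ((1 / 2 : ℝ) • (q + p))
  have := hcfl (k⁻¹ • (q - p))
  rw [discreteEnergy]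
  linarith

theorem discreteEnergy_nonneg (hα : 0 ≤ α) (hcoer : ∀ w, α * Nh w ^ 2 ≤ a w w)
    (hcfl : ∀ w, k ^ 2 * a w w ≤ ‖w‖ ^ 2) (p q : E) : 0 ≤ discreteEnergy a k p q :=
  le_trans (by positivity) (discreteEnergy_lower hcoer hcfl p q)

theorem norm_le_sqrt_two_mul_sqrt_discreteEnergy (hα : 0 ≤ α)
    (hcoer : ∀ w, α * Nh w ^ 2 ≤ a w w) (hcfl : ∀ w, k ^ 2 * a w w ≤ ‖w‖ ^ 2) (p q : E) :
    ‖k⁻¹ • (q - p)‖ ≤ √2 * √(discreteEnergy a k p q) := by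
  rw [← Real.sqrt_mul zero_le_two, Real.le_sqrt (norm_nonneg _)
    (mul_nonneg zero_le_two (discreteEnergy_nonneg hα hcoer hcfl p q))]
  have := discreteEnergy_lower hcoer hcfl p q
  have : 0 ≤ α * Nh ((1 / 2 : ℝ) • (q + p)) ^ 2 := by positivity
  have : 0 ≤ ‖k⁻¹ • (q - p)‖ ^ 2 := by positivity
  linarith

theorem seminorm_le_sqrt_discreteEnergy (hα : 0 < α) (hcoer : ∀ w, α * Nh w ^ 2 ≤ a w w)
    (hcfl : ∀ w, k ^ 2 * a w w ≤ ‖w‖ ^ 2) (p q : E) :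
    Nh ((1 / 2 : ℝ) • (q + p)) ≤ (√α)⁻¹ * √(discreteEnergy a k p q) := by
  rw [← Real.sqrt_inv, ← Real.sqrt_mul (inv_nonneg.mpr hα.le),
    Real.le_sqrt (apply_nonneg _ _) (mul_nonneg (inv_nonneg.mpr hα.le)
      (discreteEnergy_nonneg hα.le hcoer hcfl p q)), le_inv_mul_iff₀ hα]
  have := discreteEnergy_lower hcoer hcfl p q
  have : 0 ≤ ‖k⁻¹ • (q - p)‖ ^ 2 := by positivity
  linarith

theorem sqrt_discreteEnergy_le (hpos : ∀ w, 0 ≤ a w w) (hbound : ∀ w, a w w ≤ β * Nh w ^ 2)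
    (hβ : 0 ≤ β) (p q : E) :
    √(discreteEnergy a k p q) ≤ ‖k⁻¹ • (q - p)‖ + √β * Nh ((1 / 2 : ℝ) • (q + p)) := by
  rw [Real.sqrt_le_left (by positivity), add_sq, mul_pow, Real.sq_sqrt hβ, discreteEnergy]
  have := hbound ((1 / 2 : ℝ) • (q + p))
  have := mul_nonneg (by positivity : (0 : ℝ) ≤ k ^ 2 / 4) (hpos (k⁻¹ • (q - p)))
  have : 0 ≤ ‖k⁻¹ • (q - p)‖ * (√β * Nh ((1 / 2 : ℝ) • (q + p))) := by positivity
  linarith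

theorem sqrt_discreteEnergy_le_add (hα : 0 ≤ α) (hcoer : ∀ w, α * Nh w ^ 2 ≤ a w w)
    (hcfl : ∀ w, k ^ 2 * a w w ≤ ‖w‖ ^ 2) (hk : 0 < k) {F : ℝ} (hF : 0 ≤ F) {p q r : E}
    (hinc : discreteEnergy a k q r - discreteEnergy a k p q ≤ F * ‖r - p‖) :
    √(discreteEnergy a k q r) ≤ √(discreteEnergy a k p q) + √2 * k * F := by
  apply le_add_of_sq_le_sq_add_mul_add (Real.sqrt_nonneg _) (by positivity)
  rw [Real.sq_sqrt (discreteEnergy_nonneg hα hcoer hcfl q r),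
    Real.sq_sqrt (discreteEnergy_nonneg hα hcoer hcfl p q)]
  have hqr := norm_le_sqrt_two_mul_sqrt_discreteEnergy hα hcoer hcfl q r
  have hpq := norm_le_sqrt_two_mul_sqrt_discreteEnergy hα hcoer hcfl p q
  calc discreteEnergy a k q r ≤ discreteEnergy a k p q + F * ‖r - p‖ := by linarith
    _ ≤ discreteEnergy a k p q + F * (k * (‖k⁻¹ • (r - q)‖ + ‖k⁻¹ • (q - p)‖)) := by
        gcongr; exact norm_sub_le_mul_add_norm_inv_smul hk p q r
    _ ≤ _ := by
        have : 0 ≤ F * k := by positivity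
        nlinarith

theorem sqrt_discreteEnergy_le_add_mul (hα : 0 ≤ α) (hcoer : ∀ w, α * Nh w ^ 2 ≤ a w w)
    (hcfl : ∀ w, k ^ 2 * a w w ≤ ‖w‖ ^ 2) (hk : 0 < k) {F : ℝ} (hF : 0 ≤ F) (U : ℕ → E)
    (m : ℕ) (hinc : ∀ j < m, discreteEnergy a k (U (j + 1)) (U (j + 2))
      - discreteEnergy a k (U j) (U (j + 1)) ≤ F * ‖U (j + 2) - U j‖) :
    √(discreteEnergy a k (U m) (U (m + 1)))
      ≤ √(discreteEnergy a k (U 0) (U 1)) + m * (√2 * k * F) := by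
  induction m with
  | zero => simp
  | succ j ih =>
    have hstep := sqrt_discreteEnergy_le_add hα hcoer hcfl hk hF (hinc j j.lt_succ_self)
    have := ih fun i hi => hinc i (hi.trans j.lt_succ_self)
    push_cast
    linarith

theorem norm_add_seminorm_le_of_increment_le (hα : 0 < α) (hβ : 0 ≤ β)
    (hcoer : ∀ w, α * Nh w ^ 2 ≤ a w w) (hbound : ∀ w, a w w ≤ β * Nh w ^ 2)
    (hcfl : ∀ w, k ^ 2 * a w w ≤ ‖w‖ ^ 2) (hk : 0 < k) {F T : ℝ} (hF : 0 ≤ F) (U : ℕ → E)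
    (m : ℕ) (hmk : m * k ≤ T)
    (hinc : ∀ j < m, discreteEnergy a k (U (j + 1)) (U (j + 2))
      - discreteEnergy a k (U j) (U (j + 1)) ≤ F * ‖U (j + 2) - U j‖) :
    ‖k⁻¹ • (U (m + 1) - U m)‖ + Nh ((1 / 2 : ℝ) • (U (m + 1) + U m))
      ≤ (√2 + (√α)⁻¹) * (‖k⁻¹ • (U 1 - U 0)‖ + √β * Nh ((1 / 2 : ℝ) • (U 1 + U 0))
        + √2 * T * F) := by
  have hgrowth := sqrt_discreteEnergy_le_add_mul hα.le hcoer hcfl hk hF U m hinc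
  have hinit := sqrt_discreteEnergy_le (k := k)
    (fun w => (by positivity : 0 ≤ α * Nh w ^ 2).trans (hcoer w)) hbound hβ (U 0) (U 1)
  calc _ ≤ (√2 + (√α)⁻¹) * √(discreteEnergy a k (U m) (U (m + 1))) := by
        rw [add_mul]
        exact add_le_add (norm_le_sqrt_two_mul_sqrt_discreteEnergy hα.le hcoer hcfl _ _)
          (seminorm_le_sqrt_discreteEnergy hα hcoer hcfl _ _)
    _ ≤ _ := by
        gcongr
        nlinarith [mul_le_mul_of_nonneg_left hmk (by positivity : 0 ≤ √2 * F)]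

end

theorem discreteEnergy_sub_le_of_scheme {H : Type*} [NormedAddCommGroup H]
    [InnerProductSpace ℝ H] {V : Submodule ℝ H} {a : V →ₗ[ℝ] V →ₗ[ℝ] ℝ}
    (hsymm : ∀ w v, a w v = a v w) {k : ℝ} (hk : k ≠ 0) {g : H} {F : ℝ} (hg : ‖g‖ ≤ F)
    {p q r : V} (hscheme : ∀ v : V,
      ⟪(((k ^ 2)⁻¹ • (r - (2 : ℝ) • q + p) : V) : H), (v : H)⟫ + a q v = ⟪g, (v : H)⟫) :
    discreteEnergy a k q r - discreteEnergy a k p q ≤ F * ‖r - p‖ := by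
  rw [discreteEnergy_sub hsymm hk, Submodule.coe_inner, hscheme]
  exact (real_inner_le_norm _ _).trans (mul_le_mul_of_nonneg_right hg (norm_nonneg _))

end ExplicitScheme

open ExplicitScheme in
/-- Conditional stability of the explicit fully discrete scheme under the CFL condition. -/
theorem explicit_scheme_stability (α β T : ℝ) (hα : 0 < α) (hαβ : α ≤ β) (hT : 0 < T) :
    ∃ C > 0,
      ∀ (H : Type) [NormedAddCommGroup H] [InnerProductSpace ℝ H] [CompleteSpace H]
        (V : Submodule ℝ H) (Nh : Seminorm ℝ V) (a : V →ₗ[ℝ] V →ₗ[ℝ] ℝ),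
        (∀ w v : V, a w v = a v w) →
        (∀ w : V, α * Nh w ^ 2 ≤ a w w) →
        (∀ w v : V, |a w v| ≤ β * Nh w * Nh v) →
        ∀ (h Cinv : ℝ), 0 < h → 0 < Cinv →
          (∀ v : V, Nh v ≤ Cinv / h ^ 2 * ‖v‖) →
          ∀ (N : ℕ) (hN : 2 ≤ N) (k : ℝ), k = T / N →
            k ≤ (Real.sqrt β)⁻¹ * Cinv⁻¹ * h ^ 2 →
            ∀ (f : ℕ → H) (U : ℕ → V),
              (∀ n, 1 ≤ n → n ≤ N - 1 → ∀ v : V,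
                ⟪(((k ^ 2)⁻¹ • (U (n + 1) - (2 : ℝ) • U n + U (n - 1)) : V) : H), (v : H)⟫
                    + a (U n) v = ⟪f n, (v : H)⟫) →
              ∀ m, 1 ≤ m → m ≤ N - 1 →
                ‖(k⁻¹ • (U (m + 1) - U m) : V)‖ + Nh ((1 / 2 : ℝ) • (U (m + 1) + U m))
                  ≤ C * (‖(k⁻¹ • (U 1 - U 0) : V)‖ + Nh ((1 / 2 : ℝ) • (U 1 + U 0))
                      + (Finset.Icc 1 (N - 1)).sup' (Finset.nonempty_Icc.mpr (by omega))
                          fun n => ‖f n‖) := by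
  have hβ : 0 < β := hα.trans_le hαβ
  refine ⟨(√2 + (√α)⁻¹) * (1 + √β + √2 * T), by positivity, ?_⟩
  intro H _ _ _ V Nh a hsymm hcoer hbound h Cinv hh hCinv hinv N hN k hkT hCFL f U hscheme m
    _ hmN
  have hk : 0 < k := by rw [hkT]; positivity
  have hbound' (w : V) : a w w ≤ β * Nh w ^ 2 := by
    simpa [sq, mul_assoc] using (le_abs_self _).trans (hbound w w)
  have hcfl : ∀ w : V, k ^ 2 * a w w ≤ ‖w‖ ^ 2 :=
    sq_mul_apply_self_le_norm_sq hbound' hβ.le hinv hk.le <|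
      calc k * √β * (Cinv / h ^ 2) ≤ (√β)⁻¹ * Cinv⁻¹ * h ^ 2 * √β * (Cinv / h ^ 2) := by gcongr
        _ = 1 := by field_simp
  set F := (Finset.Icc 1 (N - 1)).sup' (Finset.nonempty_Icc.mpr (by omega)) fun n => ‖f n‖
  have hfF (n : ℕ) (hn1 : 1 ≤ n) (hnN : n ≤ N - 1) : ‖f n‖ ≤ F :=
    Finset.le_sup' (fun n => ‖f n‖) (Finset.mem_Icc.mpr ⟨hn1, hnN⟩)
  have hF : 0 ≤ F := (norm_nonneg _).trans (hfF 1 le_rfl (by omega))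
  have hmk : m * k ≤ T :=
    calc m * k ≤ N * k := by gcongr; exact_mod_cast hmN.trans (N.sub_le 1)
      _ = T := by rw [hkT]; field_simp
  have hinc : ∀ j < m, discreteEnergy a k (U (j + 1)) (U (j + 2))
      - discreteEnergy a k (U j) (U (j + 1)) ≤ F * ‖U (j + 2) - U j‖ := fun j hj =>
    discreteEnergy_sub_le_of_scheme hsymm hk.ne' (hfF (j + 1) (by omega) (by omega))
      (by simpa only [Nat.add_sub_cancel] using hscheme (j + 1) (by omega) (by omega))
  refine (norm_add_seminorm_le_of_increment_le hα hβ.le hcoer hbound' hcfl hk hF U m hmk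
    hinc).trans ?_
  rw [mul_assoc (√2 + (√α)⁻¹)]
  gcongr
  nlinarith [norm_nonneg (k⁻¹ • (U 1 - U 0) : V), apply_nonneg Nh ((1 / 2 : ℝ) • (U 1 + U 0)),
    Real.sqrt_nonneg β, Real.sqrt_nonneg 2, mul_nonneg (Real.sqrt_nonneg 2) hT.le]
end

section
/- For every choice of constants α > 0, T > 0 and C₁ > 0 there exists a constant C > 0 with the following property. For every abstract FEM setting (H, V, ‖·‖_h, a_h) with ellipticity constant α, every h > 0, every linear map E : V → H with ‖E v‖ ≤ C₁ h² ‖v‖_h for all v ∈ V, every continuously differentiable g : [0,T] → H, every continuous r : [0,T] → H, and every twice continuously differentiable θ : [0,T] → V with θ(0) = 0, θ'(0) = 0 and (θ''(t), v) + a_h(θ(t), v) = (g(t), E v) − (r(t), v) for all v ∈ V and t ∈ [0,T], one has for every t ∈ [0,T]: ‖θ'(t)‖² + α ‖θ(t)‖_h² ≤ C ( h⁴ ( sup_{s ∈ [0,T]} ‖g(s)‖² + ∫₀ᵀ ‖g'(s)‖² ds ) + ∫₀ᵀ ‖r(s)‖² ds ). -/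
open scoped RealInnerProductSpace
open Set Filter Topology MeasureTheory

/-!
`t ↦ E (θ t)` need not be differentiable (`E` is only bounded in the `‖·‖_h`-seminorm), so the
equation cannot simply be tested with `θ'`. Instead, writing `p = r + θ''`, the equation reads
`a_h(θ t, v) = (g t, E v) - (p t, v)`, and the symmetry of `a_h` gives the difference formula
`ψ s - ψ t = -(g s - g t, E (θ s + θ t)) - (p s + p t, θ s - θ t)` for
`ψ = a_h(θ, θ) - 2 (g, E θ)`. Hence `ψ' = -2 (g', E θ) - 2 (p, θ')`, an integration by parts in
time that only needs `E θ` to be bounded (by ellipticity) and `s ↦ (g' t, E θ s)` to be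
continuous (a uniform limit of difference quotients of `g`). Integrating yields the energy identity
`‖θ' τ‖² + a_h(θ τ, θ τ) = 2 (g τ, E θ τ) - 2 ∫₀^τ ((g', E θ) + (r, θ'))`. At a maximiser `τ` of
the energy `M`, Young's inequality with `‖E θ‖² ≤ C₁² h⁴ M / α` bounds the boundary term by
data plus `M / 4` and the integral by data plus `M / 2`, and the excess is absorbed.
-/

theorem le_max_one_div_of_mul_sq_le {α b d y : ℝ} (hα : 0 < α) (hd : 0 ≤ d)
    (h : α * y ^ 2 ≤ b * y + d) : y ≤ max 1 ((b + d) / α) := by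
  rcases le_or_gt y 1 with hy1 | hy1
  · exact le_max_of_le_left hy1
  · refine le_max_of_le_right ((le_div_iff₀ hα).2 ?_)
    nlinarith

theorem intervalIntegral_le_mul_integral_add_mul {f φ : ℝ → ℝ} {τ T c b : ℝ}
    (hτ : τ ∈ Icc 0 T) (hφ : IntervalIntegrable φ volume 0 T) (hφ0 : ∀ t ∈ Icc 0 T, 0 ≤ φ t)
    (hc : 0 ≤ c) (hb : 0 ≤ b) (hfφ : ∀ t ∈ Icc 0 τ, f t ≤ c * φ t + b) :
    ∫ t in 0..τ, f t ≤ c * (∫ t in 0..T, φ t) + T * b := by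
  have hφτ : IntervalIntegrable φ volume 0 τ := hφ.mono_set (by
      rw [uIcc_of_le hτ.1, uIcc_of_le (hτ.1.trans hτ.2)]; exact Icc_subset_Icc_right hτ.2)
  -- a non-integrable `f` has integral `0`
  by_cases hf : IntervalIntegrable f volume 0 τ
  · calc ∫ t in 0..τ, f t ≤ ∫ t in 0..τ, (c * φ t + b) :=
          intervalIntegral.integral_mono_on hτ.1 hf
            ((hφτ.const_mul c).add intervalIntegrable_const) hfφ
      _ = c * (∫ t in 0..τ, φ t) + τ * b := by
          rw [intervalIntegral.integral_add (hφτ.const_mul c) intervalIntegrable_const,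
            intervalIntegral.integral_const_mul, intervalIntegral.integral_const, smul_eq_mul,
            sub_zero]
      _ ≤ c * (∫ t in 0..T, φ t) + T * b := by
          gcongr
          · exact intervalIntegral.integral_mono_interval le_rfl hτ.1 hτ.2
              ((ae_restrict_iff' measurableSet_Ioc).2
                (ae_of_all _ fun t ht => hφ0 t ⟨ht.1.le, ht.2⟩)) hφ
          · exact hτ.2
  · rw [intervalIntegral.integral_undef hf]
    have := intervalIntegral.integral_nonneg (μ := volume) (hτ.1.trans hτ.2) hφ0
    have := mul_nonneg (hτ.1.trans hτ.2) hb
    nlinarith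

theorem integral_eq_sub_of_hasDerivWithinAt_Icc {f f' : ℝ → ℝ} {a b τ : ℝ} (hτ : τ ∈ Icc a b)
    (hf : ∀ t ∈ Icc a b, HasDerivWithinAt f (f' t) (Icc a b) t) (hf' : ContinuousOn f' (Icc a b)) :
    ∫ t in a..τ, f' t = f τ - f a := by
  have hsub : Icc a τ ⊆ Icc a b := Icc_subset_Icc_right hτ.2
  refine intervalIntegral.integral_eq_sub_of_hasDerivAt_of_le hτ.1
    (fun t ht => (hf t (hsub ht)).continuousWithinAt.mono hsub) (fun t ht => ?_)
    ((hf'.mono hsub).intervalIntegrable_of_Icc hτ.1)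
  exact (hf t (hsub (Ioo_subset_Icc_self ht))).hasDerivAt
    (Icc_mem_nhds ht.1 (ht.2.trans_le hτ.2))

section InnerProduct

variable {H : Type*} [NormedAddCommGroup H] [InnerProductSpace ℝ H]

theorem two_inner_le_of_norm_sq_le {u v : H} {K M c : ℝ} (hK : 0 < K) (hc : 0 < c)
    (hv : ‖v‖ ^ 2 ≤ K * M) : 2 * ⟪u, v⟫ ≤ c * K * ‖u‖ ^ 2 + M / c := by
  have hcK : 0 < c * K := mul_pos hc hK
  have young : 2 * (‖u‖ * ‖v‖) ≤ c * K * ‖u‖ ^ 2 + ‖v‖ ^ 2 / (c * K) := by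
    have hsq : c * K * ‖u‖ ^ 2 + ‖v‖ ^ 2 / (c * K) - 2 * (‖u‖ * ‖v‖)
        = (c * K * ‖u‖ - ‖v‖) ^ 2 / (c * K) := by
      field_simp; ring
    nlinarith [hsq, div_nonneg (sq_nonneg (c * K * ‖u‖ - ‖v‖)) hcK.le]
  calc 2 * ⟪u, v⟫ ≤ 2 * (‖u‖ * ‖v‖) := by gcongr; exact real_inner_le_norm u v
    _ ≤ c * K * ‖u‖ ^ 2 + ‖v‖ ^ 2 / (c * K) := young
    _ ≤ c * K * ‖u‖ ^ 2 + K * M / (c * K) := by gcongr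
    _ = c * K * ‖u‖ ^ 2 + M / c := by field_simp

theorem tendstoUniformlyOn_inner_of_norm_le {ι X : Type*} {l : Filter ι} {x : ι → H} {x₀ : H}
    {w : X → H} {S : Set X} {K : ℝ} (hx : Tendsto x l (𝓝 x₀)) (hw : ∀ s ∈ S, ‖w s‖ ≤ K) :
    TendstoUniformlyOn (fun i s => ⟪x i, w s⟫) (fun s => ⟪x₀, w s⟫) l S := by
  rw [Metric.tendstoUniformlyOn_iff]
  intro ε hε
  have hsmall : Tendsto (fun i => ‖x i - x₀‖ * K) l (𝓝 0) := by
    simpa using ((tendsto_iff_norm_sub_tendsto_zero.1 hx).mul_const K)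
  filter_upwards [hsmall.eventually (gt_mem_nhds hε)] with i hi s hs
  calc dist ⟪x₀, w s⟫ ⟪x i, w s⟫ = ‖⟪x i - x₀, w s⟫‖ := by
        rw [dist_comm, dist_eq_norm, inner_sub_left]
    _ ≤ ‖x i - x₀‖ * ‖w s‖ := norm_inner_le_norm _ _
    _ ≤ ‖x i - x₀‖ * K := by gcongr; exact hw s hs
    _ < ε := hi

theorem ContinuousOn.inner_of_norm_le {X : Type*} [TopologicalSpace X] {S : Set X}
    {u w : X → H} {K : ℝ} (hu : ContinuousOn u S) (hw : ∀ s ∈ S, ‖w s‖ ≤ K)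
    (huw : ∀ t ∈ S, ContinuousOn (fun s => ⟪u t, w s⟫) S) :
    ContinuousOn (fun t => ⟪u t, w t⟫) S := fun t ht =>
  (tendstoUniformlyOn_inner_of_norm_le (hu t ht) hw).tendsto_comp (huw t ht t ht) tendsto_id

theorem continuousOn_inner_of_hasDerivWithinAt {S : Set ℝ} {g w : ℝ → H} {g' : H} {t₀ K : ℝ}
    (hg : HasDerivWithinAt g g' S t₀) (ht₀ : AccPt t₀ (𝓟 S)) (ht₀S : t₀ ∈ S)
    (hw : ∀ s ∈ S, ‖w s‖ ≤ K) (hgw : ∀ t ∈ S, ContinuousOn (fun s => ⟪g t, w s⟫) S) :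
    ContinuousOn (fun s => ⟪g', w s⟫) S := by
  have := accPt_principal_iff_nhdsWithin.mp ht₀
  refine (tendstoUniformlyOn_inner_of_norm_le
    (hasDerivWithinAt_iff_tendsto_slope.mp hg) hw).continuousOn ?_
  refine Eventually.frequently ?_
  filter_upwards [self_mem_nhdsWithin] with y hy
  have hslope : ∀ s, ⟪slope g t₀ y, w s⟫ = (y - t₀)⁻¹ * (⟪g y, w s⟫ - ⟪g t₀, w s⟫) := fun s => by
    rw [slope_def_module, real_inner_smul_left, inner_sub_left]
  simp_rw [hslope]
  exact continuousOn_const.mul ((hgw y hy.1).sub (hgw t₀ ht₀S))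

theorem neg_integral_two_inner_add_le {u v w z : ℝ → H} {T τ K M : ℝ} (hT : 0 < T)
    (hτ : τ ∈ Icc 0 T) (hK : 0 < K) (hM : 0 ≤ M) (hu : ContinuousOn u (Icc 0 T))
    (hv : ContinuousOn v (Icc 0 T)) (hw : ∀ t ∈ Icc 0 T, ‖w t‖ ^ 2 ≤ K * M)
    (hz : ∀ t ∈ Icc 0 T, ‖z t‖ ^ 2 ≤ M) :
    -∫ t in 0..τ, 2 * (⟪u t, w t⟫ + ⟪v t, z t⟫)
      ≤ 4 * T * (K * (∫ t in 0..T, ‖u t‖ ^ 2) + ∫ t in 0..T, ‖v t‖ ^ 2) + M / 2 := by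
  have hu2 : IntervalIntegrable (fun t => ‖u t‖ ^ 2) volume 0 T :=
    (hu.norm.pow 2).intervalIntegrable_of_Icc hT.le
  have hv2 : IntervalIntegrable (fun t => ‖v t‖ ^ 2) volume 0 T :=
    (hv.norm.pow 2).intervalIntegrable_of_Icc hT.le
  rw [← intervalIntegral.integral_const_mul, ← intervalIntegral.integral_add (hu2.const_mul K) hv2,
    ← intervalIntegral.integral_neg, show M / 2 = T * (M / (2 * T)) by field_simp]
  refine intervalIntegral_le_mul_integral_add_mul hτ ((hu2.const_mul K).add hv2)
    (fun t _ => by positivity) (by positivity) (by positivity) fun t ht => ?_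
  have htT : t ∈ Icc 0 T := Icc_subset_Icc_right hτ.2 ht
  have hu' := two_inner_le_of_norm_sq_le (u := -u t) hK (by positivity : 0 < 4 * T) (hw t htT)
  have hv' := two_inner_le_of_norm_sq_le (u := -v t) one_pos (by positivity : 0 < 4 * T)
    ((hz t htT).trans_eq (one_mul M).symm)
  rw [inner_neg_left, norm_neg] at hu' hv'
  field_simp at hu' hv' ⊢
  linarith

end InnerProduct

section VariationalEquation

variable {H : Type*} [NormedAddCommGroup H] [InnerProductSpace ℝ H] {V : Submodule ℝ H}
  {a : V →ₗ[ℝ] V →ₗ[ℝ] ℝ} {E : V →ₗ[ℝ] H} {S : Set ℝ} {g p : ℝ → H} {θ : ℝ → V}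

theorem inner_sub_inner_comm (ha : ∀ w v : V, a w v = a v w)
    (heq : ∀ t ∈ S, ∀ v : V, a (θ t) v = ⟪g t, E v⟫ - ⟪p t, (v : H)⟫) {s t : ℝ}
    (hs : s ∈ S) (ht : t ∈ S) :
    ⟪g t, E (θ s)⟫ - ⟪p t, (θ s : H)⟫ = ⟪g s, E (θ t)⟫ - ⟪p s, (θ t : H)⟫ := by
  rw [← heq t ht, ← heq s hs, ha]

theorem continuousOn_inner_apply (ha : ∀ w v : V, a w v = a v w)
    (heq : ∀ t ∈ S, ∀ v : V, a (θ t) v = ⟪g t, E v⟫ - ⟪p t, (v : H)⟫)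
    (hg : ContinuousOn g S) (hp : ContinuousOn p S) (hθ : ContinuousOn θ S) {t : ℝ}
    (ht : t ∈ S) : ContinuousOn (fun s => ⟪g t, E (θ s)⟫) S := by
  have hθH : ContinuousOn (fun s => (θ s : H)) S := continuous_subtype_val.comp_continuousOn hθ
  have hcont : ContinuousOn (fun s => ⟪g s, E (θ t)⟫ - ⟪p s, (θ t : H)⟫ + ⟪p t, (θ s : H)⟫) S :=
    ((hg.inner continuousOn_const).sub (hp.inner continuousOn_const)).add
      (continuousOn_const.inner hθH)
  refine hcont.congr fun s hs => ?_
  have := inner_sub_inner_comm ha heq hs ht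
  simp only
  linarith

theorem exists_norm_apply_le {Nh : Seminorm ℝ V} {α c : ℝ} (hS : IsCompact S) (hα : 0 < α)
    (hell : ∀ w : V, α * Nh w ^ 2 ≤ a w w) (hc : 0 ≤ c) (hE : ∀ v : V, ‖E v‖ ≤ c * Nh v)
    (heq : ∀ t ∈ S, ∀ v : V, a (θ t) v = ⟪g t, E v⟫ - ⟪p t, (v : H)⟫)
    (hg : ContinuousOn g S) (hp : ContinuousOn p S) (hθ : ContinuousOn θ S) :
    ∃ K, ∀ s ∈ S, ‖E (θ s)‖ ≤ K := by
  obtain ⟨G, hG⟩ := hS.exists_bound_of_continuousOn hg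
  obtain ⟨P, hP⟩ := hS.exists_bound_of_continuousOn hp
  obtain ⟨Θ, hΘ⟩ := hS.exists_bound_of_continuousOn hθ
  refine ⟨c * max 1 ((G * c + P * Θ) / α), fun s hs => (hE _).trans ?_⟩
  gcongr
  have hPΘ : 0 ≤ P * Θ := mul_nonneg ((norm_nonneg _).trans (hP s hs))
    ((norm_nonneg _).trans (hΘ s hs))
  refine le_max_one_div_of_mul_sq_le hα hPΘ ?_
  calc α * Nh (θ s) ^ 2 ≤ a (θ s) (θ s) := hell _
    _ = ⟪g s, E (θ s)⟫ - ⟪p s, (θ s : H)⟫ := heq s hs _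
    _ ≤ ‖g s‖ * ‖E (θ s)‖ + ‖p s‖ * ‖(θ s : H)‖ := by
        have := real_inner_le_norm (g s) (E (θ s))
        have := neg_le_of_abs_le (abs_real_inner_le_norm (p s) (θ s : H))
        linarith
    _ ≤ G * (c * Nh (θ s)) + P * Θ := by
        gcongr
        · exact (norm_nonneg _).trans (hG s hs)
        · exact hG s hs
        · exact hE _
        · exact (norm_nonneg _).trans (hP s hs)
        · exact hP s hs
        · exact hΘ s hs
    _ = G * c * Nh (θ s) + P * Θ := by ring

theorem continuousOn_inner_apply_of_hasDerivWithinAt {g' : ℝ → H} {K : ℝ}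
    (ha : ∀ w v : V, a w v = a v w)
    (heq : ∀ t ∈ S, ∀ v : V, a (θ t) v = ⟪g t, E v⟫ - ⟪p t, (v : H)⟫)
    (hK : ∀ s ∈ S, ‖E (θ s)‖ ≤ K) (hS : ∀ t ∈ S, AccPt t (𝓟 S))
    (hg : ∀ t ∈ S, HasDerivWithinAt g (g' t) S t) (hp : ContinuousOn p S)
    (hθ : ContinuousOn θ S) {t : ℝ} (ht : t ∈ S) :
    ContinuousOn (fun s => ⟪g' t, E (θ s)⟫) S :=
  continuousOn_inner_of_hasDerivWithinAt (hg t ht) (hS t ht) ht hK fun _ hs =>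
    continuousOn_inner_apply ha heq (fun t ht => (hg t ht).continuousWithinAt) hp hθ hs

theorem apply_sub_two_inner_sub (ha : ∀ w v : V, a w v = a v w)
    (heq : ∀ t ∈ S, ∀ v : V, a (θ t) v = ⟪g t, E v⟫ - ⟪p t, (v : H)⟫) {s t : ℝ}
    (hs : s ∈ S) (ht : t ∈ S) :
    (a (θ s) (θ s) - 2 * ⟪g s, E (θ s)⟫) - (a (θ t) (θ t) - 2 * ⟪g t, E (θ t)⟫)
      = -⟪g s - g t, E (θ s) + E (θ t)⟫ - ⟪p s + p t, (θ s : H) - θ t⟫ := by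
  have := inner_sub_inner_comm ha heq hs ht
  rw [heq s hs, heq t ht]
  simp only [inner_add_left, inner_add_right, inner_sub_left, inner_sub_right]
  linarith

theorem hasDerivWithinAt_apply_sub_two_inner {g' : H} {θ' : V} {K t : ℝ}
    (ha : ∀ w v : V, a w v = a v w)
    (heq : ∀ t ∈ S, ∀ v : V, a (θ t) v = ⟪g t, E v⟫ - ⟪p t, (v : H)⟫)
    (hK : ∀ s ∈ S, ‖E (θ s)‖ ≤ K) (ht : t ∈ S) (hg : HasDerivWithinAt g g' S t)
    (hp : ContinuousWithinAt p S t) (hθ : HasDerivWithinAt θ θ' S t)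
    (hg'E : ContinuousWithinAt (fun s => ⟪g', E (θ s)⟫) S t) :
    HasDerivWithinAt (fun s => a (θ s) (θ s) - 2 * ⟪g s, E (θ s)⟫)
      (-2 * (⟪g', E (θ t)⟫ + ⟪p t, (θ' : H)⟫)) S t := by
  have hθH : HasDerivWithinAt (fun s => (θ s : H)) θ' S t :=
    V.subtypeL.hasFDerivAt.comp_hasDerivWithinAt t hθ
  have hlim_g : Tendsto (fun s => ⟪slope g t s, E (θ s) + E (θ t)⟫) (𝓝[S \ {t}] t)
      (𝓝 ⟪g', E (θ t) + E (θ t)⟫) :=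
    (tendstoUniformlyOn_inner_of_norm_le (hasDerivWithinAt_iff_tendsto_slope.mp hg)
      fun s hs => (norm_add_le _ _).trans (add_le_add (hK s hs) (hK t ht))).tendsto_comp
      (by simp only [inner_add_right]; exact hg'E.add continuousWithinAt_const)
      (tendsto_nhdsWithin_mono_left sdiff_subset tendsto_id)
  have hlim_p : Tendsto (fun s => ⟪p s + p t, slope (fun s => (θ s : H)) t s⟫) (𝓝[S \ {t}] t)
      (𝓝 ⟪p t + p t, (θ' : H)⟫) :=
    ((hp.mono sdiff_subset).tendsto.add tendsto_const_nhds).inner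
      (hasDerivWithinAt_iff_tendsto_slope.mp hθH)
  rw [hasDerivWithinAt_iff_tendsto_slope]
  convert (hlim_g.neg.sub hlim_p).congr' ?_ using 2
  · simp only [inner_add_left, inner_add_right]
    ring
  · filter_upwards [self_mem_nhdsWithin] with s hs
    rw [slope_def_field, slope_def_module, slope_def_module, real_inner_smul_left,
      real_inner_smul_right, apply_sub_two_inner_sub ha heq hs.1 ht, div_eq_inv_mul]
    ring

theorem continuousOn_apply_self {K : ℝ} (ha : ∀ w v : V, a w v = a v w)
    (heq : ∀ t ∈ S, ∀ v : V, a (θ t) v = ⟪g t, E v⟫ - ⟪p t, (v : H)⟫)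
    (hK : ∀ s ∈ S, ‖E (θ s)‖ ≤ K) (hg : ContinuousOn g S) (hp : ContinuousOn p S)
    (hθ : ContinuousOn θ S) : ContinuousOn (fun t => a (θ t) (θ t)) S :=
  ((hg.inner_of_norm_le hK fun _ ht => continuousOn_inner_apply ha heq hg hp hθ ht).sub
    (hp.inner (continuous_subtype_val.comp_continuousOn hθ))).congr fun t ht => heq t ht (θ t)

end VariationalEquation

section Energy

variable {H : Type*} [NormedAddCommGroup H] [InnerProductSpace ℝ H] {V : Submodule ℝ H}
  {a : V →ₗ[ℝ] V →ₗ[ℝ] ℝ} {E : V →ₗ[ℝ] H} {S : Set ℝ} {T K : ℝ} {g g' r : ℝ → H}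
  {θ θ' θ'' : ℝ → V}

theorem apply_eq_inner_sub_inner_add
    (heq : ∀ t ∈ S, ∀ v : V,
      ⟪((θ'' t : V) : H), (v : H)⟫ + a (θ t) v = ⟪g t, E v⟫ - ⟪r t, (v : H)⟫) :
    ∀ t ∈ S, ∀ v : V, a (θ t) v = ⟪g t, E v⟫ - ⟪r t + θ'' t, (v : H)⟫ := fun t ht v => by
  rw [inner_add_left]
  linarith [heq t ht v]

theorem energy_identity (hT : 0 < T) (ha : ∀ w v : V, a w v = a v w)
    (heq : ∀ t ∈ Icc 0 T, ∀ v : V,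
      ⟪((θ'' t : V) : H), (v : H)⟫ + a (θ t) v = ⟪g t, E v⟫ - ⟪r t, (v : H)⟫)
    (hK : ∀ s ∈ Icc 0 T, ‖E (θ s)‖ ≤ K)
    (hg : ∀ t ∈ Icc 0 T, HasDerivWithinAt g (g' t) (Icc 0 T) t) (hg' : ContinuousOn g' (Icc 0 T))
    (hr : ContinuousOn r (Icc 0 T)) (hθ : ∀ t ∈ Icc 0 T, HasDerivWithinAt θ (θ' t) (Icc 0 T) t)
    (hθ' : ∀ t ∈ Icc 0 T, HasDerivWithinAt θ' (θ'' t) (Icc 0 T) t)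
    (hθ'' : ContinuousOn θ'' (Icc 0 T)) (hθ0 : θ 0 = 0) (hθ'0 : θ' 0 = 0) {τ : ℝ}
    (hτ : τ ∈ Icc 0 T) :
    ‖θ' τ‖ ^ 2 + a (θ τ) (θ τ)
      = 2 * ⟪g τ, E (θ τ)⟫ - ∫ t in 0..τ, 2 * (⟪g' t, E (θ t)⟫ + ⟪r t, (θ' t : H)⟫) := by
  have hpeq := apply_eq_inner_sub_inner_add heq
  have hp : ContinuousOn (fun t => r t + θ'' t) (Icc 0 T) :=
    hr.add (continuous_subtype_val.comp_continuousOn hθ'')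
  have hθ'H : ContinuousOn (fun t => (θ' t : H)) (Icc 0 T) :=
    continuous_subtype_val.comp_continuousOn fun t ht => (hθ' t ht).continuousWithinAt
  have hg'E : ∀ t ∈ Icc 0 T, ContinuousOn (fun s => ⟪g' t, E (θ s)⟫) (Icc 0 T) := fun t ht =>
    continuousOn_inner_apply_of_hasDerivWithinAt ha hpeq hK
      (fun t ht => (uniqueDiffOn_Icc hT t ht).accPt) hg hp
      (fun t ht => (hθ t ht).continuousWithinAt) ht
  have hderiv : ∀ t ∈ Icc 0 T, HasDerivWithinAt
      (fun s => ‖θ' s‖ ^ 2 + (a (θ s) (θ s) - 2 * ⟪g s, E (θ s)⟫))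
      (-(2 * (⟪g' t, E (θ t)⟫ + ⟪r t, (θ' t : H)⟫))) (Icc 0 T) t := by
    intro t ht
    refine ((hθ' t ht).norm_sq.add (hasDerivWithinAt_apply_sub_two_inner ha hpeq hK ht (hg t ht)
      (hp t ht) (hθ t ht) (hg'E t ht t ht))).congr_deriv ?_
    rw [Submodule.coe_inner, inner_add_left, real_inner_comm]
    ring
  have hcont : ContinuousOn (fun t => -(2 * (⟪g' t, E (θ t)⟫ + ⟪r t, (θ' t : H)⟫))) (Icc 0 T) :=
    (continuousOn_const.mul ((hg'.inner_of_norm_le hK hg'E).add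
      (hr.inner hθ'H))).neg
  have hftc := integral_eq_sub_of_hasDerivWithinAt_Icc hτ hderiv hcont
  simp only [hθ0, hθ'0, map_zero, norm_zero, inner_zero_right] at hftc
  rw [intervalIntegral.integral_neg] at hftc
  linarith

theorem energy_le_s10 {Nh : Seminorm ℝ V} {α c G : ℝ} (hα : 0 < α) (hT : 0 < T) (hc : 0 < c)
    (ha : ∀ w v : V, a w v = a v w) (hell : ∀ w : V, α * Nh w ^ 2 ≤ a w w)
    (hE : ∀ v : V, ‖E v‖ ≤ c * Nh v) (hG : ∀ s ∈ Icc 0 T, ‖g s‖ ^ 2 ≤ G)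
    (heq : ∀ t ∈ Icc 0 T, ∀ v : V,
      ⟪((θ'' t : V) : H), (v : H)⟫ + a (θ t) v = ⟪g t, E v⟫ - ⟪r t, (v : H)⟫)
    (hg : ∀ t ∈ Icc 0 T, HasDerivWithinAt g (g' t) (Icc 0 T) t) (hg' : ContinuousOn g' (Icc 0 T))
    (hr : ContinuousOn r (Icc 0 T)) (hθ : ∀ t ∈ Icc 0 T, HasDerivWithinAt θ (θ' t) (Icc 0 T) t)
    (hθ' : ∀ t ∈ Icc 0 T, HasDerivWithinAt θ' (θ'' t) (Icc 0 T) t)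
    (hθ'' : ContinuousOn θ'' (Icc 0 T)) (hθ0 : θ 0 = 0) (hθ'0 : θ' 0 = 0) {t : ℝ}
    (ht : t ∈ Icc 0 T) :
    ‖θ' t‖ ^ 2 + α * Nh (θ t) ^ 2
      ≤ 16 * (c ^ 2 / α) * G
        + 16 * T * (c ^ 2 / α * (∫ s in 0..T, ‖g' s‖ ^ 2) + ∫ s in 0..T, ‖r s‖ ^ 2) := by
  set K := c ^ 2 / α
  have hK : 0 < K := by positivity
  have hpeq := apply_eq_inner_sub_inner_add heq
  have hgc : ContinuousOn g (Icc 0 T) := fun t ht => (hg t ht).continuousWithinAt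
  have hp : ContinuousOn (fun t => r t + θ'' t) (Icc 0 T) :=
    hr.add (continuous_subtype_val.comp_continuousOn hθ'')
  have hθc : ContinuousOn θ (Icc 0 T) := fun t ht => (hθ t ht).continuousWithinAt
  have hθ'c : ContinuousOn θ' (Icc 0 T) := fun t ht => (hθ' t ht).continuousWithinAt
  obtain ⟨K₀, hK₀⟩ :=
    exists_norm_apply_le isCompact_Icc hα hell hc.le hE hpeq hgc hp hθc
  obtain ⟨τ, hτ, hmax⟩ := isCompact_Icc.exists_isMaxOn (nonempty_Icc.2 hT.le)
    ((hθ'c.norm.pow 2).add (continuousOn_apply_self ha hpeq hK₀ hgc hp hθc))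
  set M := ‖θ' τ‖ ^ 2 + a (θ τ) (θ τ)
  have hFM : ∀ t ∈ Icc 0 T, ‖θ' t‖ ^ 2 + a (θ t) (θ t) ≤ M := fun t ht => hmax ht
  have hM0 : 0 ≤ M := by simpa [hθ0, hθ'0] using hFM 0 ⟨le_rfl, hT.le⟩
  have hαM : ∀ t ∈ Icc 0 T, α * Nh (θ t) ^ 2 ≤ M := fun t ht => by
    linarith [hell (θ t), sq_nonneg ‖θ' t‖, hFM t ht]
  have hθ'M : ∀ t ∈ Icc 0 T, ‖(θ' t : H)‖ ^ 2 ≤ M := fun t ht => by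
    show ‖θ' t‖ ^ 2 ≤ M
    linarith [hell (θ t), mul_nonneg hα.le (sq_nonneg (Nh (θ t))), hFM t ht]
  have hEM : ∀ t ∈ Icc 0 T, ‖E (θ t)‖ ^ 2 ≤ K * M := fun t ht =>
    calc ‖E (θ t)‖ ^ 2 ≤ (c * Nh (θ t)) ^ 2 := by gcongr; exact hE _
      _ = K * (α * Nh (θ t) ^ 2) := by simp only [K]; field_simp
      _ ≤ K * M := by gcongr; exact hαM t ht
  have hboundary : 2 * ⟪g τ, E (θ τ)⟫ ≤ 4 * K * G + M / 4 :=
    (two_inner_le_of_norm_sq_le hK four_pos (hEM τ hτ)).trans (by gcongr; exact hG τ hτ)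
  have hwork := neg_integral_two_inner_add_le hT hτ hK hM0 hg' hr hEM hθ'M
  have hMbound :
      M ≤ 16 * K * G + 16 * T * (K * (∫ s in 0..T, ‖g' s‖ ^ 2) + ∫ s in 0..T, ‖r s‖ ^ 2) := by
    have := energy_identity hT ha heq hK₀ hg hg' hr hθ hθ' hθ'' hθ0 hθ'0 hτ
    linarith
  linarith [hFM t ht, hell (θ t)]

end Energy

/-- Energy-norm error estimate for the semidiscrete approximation. -/
theorem semidiscrete_energy_error (α T C₁ : ℝ) (hα : 0 < α) (hT : 0 < T) (hC₁ : 0 < C₁) :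
    ∃ C > 0,
      ∀ (H : Type) [NormedAddCommGroup H] [InnerProductSpace ℝ H] [CompleteSpace H]
        (V : Submodule ℝ H) (Nh : Seminorm ℝ V) (a : V →ₗ[ℝ] V →ₗ[ℝ] ℝ),
        (∀ w v : V, a w v = a v w) →
        (∀ w : V, α * Nh w ^ 2 ≤ a w w) →
        ∀ (h : ℝ), 0 < h →
          ∀ (E : V →ₗ[ℝ] H), (∀ v : V, ‖E v‖ ≤ C₁ * h ^ 2 * Nh v) →
            ∀ (g g' : ℝ → H),
              (∀ t ∈ Set.Icc (0 : ℝ) T, HasDerivWithinAt g (g' t) (Set.Icc (0 : ℝ) T) t) →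
              ContinuousOn g' (Set.Icc (0 : ℝ) T) →
              ∀ (r : ℝ → H), ContinuousOn r (Set.Icc (0 : ℝ) T) →
                ∀ (θ θ' θ'' : ℝ → V),
                  (∀ t ∈ Set.Icc (0 : ℝ) T,
                    HasDerivWithinAt θ (θ' t) (Set.Icc (0 : ℝ) T) t) →
                  (∀ t ∈ Set.Icc (0 : ℝ) T,
                    HasDerivWithinAt θ' (θ'' t) (Set.Icc (0 : ℝ) T) t) →
                  ContinuousOn θ'' (Set.Icc (0 : ℝ) T) →
                  θ 0 = 0 → θ' 0 = 0 →
                  (∀ t ∈ Set.Icc (0 : ℝ) T, ∀ v : V,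
                    ⟪((θ'' t : V) : H), (v : H)⟫ + a (θ t) v
                      = ⟪g t, E v⟫ - ⟪r t, (v : H)⟫) →
                  ∀ t ∈ Set.Icc (0 : ℝ) T,
                    ‖θ' t‖ ^ 2 + α * Nh (θ t) ^ 2
                      ≤ C * (h ^ 4 * ((⨆ s : Set.Icc (0 : ℝ) T, ‖g ↑s‖ ^ 2)
                              + ∫ s in (0 : ℝ)..T, ‖g' s‖ ^ 2)
                          + ∫ s in (0 : ℝ)..T, ‖r s‖ ^ 2) := by
  refine ⟨16 * (C₁ ^ 2 / α + 1) * (T + 1), by positivity, ?_⟩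
  intro H _ _ _ V Nh a ha hell h hh E hE g g' hg hg' r hr θ θ' θ'' hθ hθ' hθ'' hθ0 hθ'0 heq t ht
  set Gsup := ⨆ s : Icc (0 : ℝ) T, ‖g s‖ ^ 2
  have hbdd : BddAbove (range fun s : Icc (0 : ℝ) T => ‖g s‖ ^ 2) := by
    refine (isCompact_Icc.bddAbove_image (f := fun s => ‖g s‖ ^ 2)
      fun s hs => (hg s hs).continuousWithinAt.norm.pow 2).mono ?_
    rintro _ ⟨s, rfl⟩
    exact ⟨s, s.2, rfl⟩
  have hG : ∀ s ∈ Icc 0 T, ‖g s‖ ^ 2 ≤ Gsup := fun s hs => le_ciSup hbdd ⟨s, hs⟩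
  have key := energy_le_s10 hα hT (by positivity : 0 < C₁ * h ^ 2) ha hell hE hG heq hg hg' hr hθ hθ'
    hθ'' hθ0 hθ'0 ht
  have hGsup : 0 ≤ Gsup := (sq_nonneg _).trans (hG 0 ⟨le_rfl, hT.le⟩)
  have hIg := intervalIntegral.integral_nonneg (μ := volume) hT.le fun s _ => sq_nonneg ‖g' s‖
  have hIr := intervalIntegral.integral_nonneg (μ := volume) hT.le fun s _ => sq_nonneg ‖r s‖
  refine key.trans (le_of_sub_nonneg ?_)
  rw [show ∀ X Y Z : ℝ, 16 * (C₁ ^ 2 / α + 1) * (T + 1) * (h ^ 4 * (X + Y) + Z)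
      - (16 * ((C₁ * h ^ 2) ^ 2 / α) * X + 16 * T * ((C₁ * h ^ 2) ^ 2 / α * Y + Z))
      = 16 * ((C₁ ^ 2 / α * T + T + 1) * (h ^ 4 * X) + (C₁ ^ 2 / α + T + 1) * (h ^ 4 * Y)
        + (C₁ ^ 2 / α * T + C₁ ^ 2 / α + 1) * Z) from fun X Y Z => by ring]
  positivity
end

section
/- Let λ > 0, T > 0, let f : [0,T] → ℝ be three times continuously differentiable, and define I(t) := ∫₀ᵗ sin(√λ (t − s)) f(s) ds. Then I is twice differentiable on [0,T] and I''(t) = √λ f(0) cos(√λ t) + f'(0) sin(√λ t) − λ^{−1/2} f''(0) cos(√λ t) + λ^{−1/2} f''(t) − λ^{−1/2} ∫₀ᵗ cos(√λ (t − s)) f'''(s) ds for all t ∈ [0,T]. -/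
/-!
Write `c = √λ`, `S g t = ∫₀ᵗ sin (c (t - s)) g s ds` and `C g t = ∫₀ᵗ cos (c (t - s)) g s ds`.
The angle-addition formulas split both kernels into products of a function of `t` and a function
of `s`, so the fundamental theorem of calculus gives `(S g)' = c C g` and `(C g)' = g - c S g`;
hence `I = S f`, `I' = c C f` and `I'' = c f - c² S f`. Differentiating `cos (c (t - s)) g s` and
`sin (c (t - s)) g s` in `s` gives the integrations by parts `c S g = g t - cos (c t) g 0 - C g'`
and `c C g = sin (c t) g 0 + S g'`; applying them to `f`, `f'`, `f''` in turn rewrites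
`c f - c² S f` as the stated formula.
-/

open Set Real MeasureTheory intervalIntegral Interval

theorem ContinuousOn.intervalIntegrable_of_mem_Icc {a b t : ℝ} {g : ℝ → ℝ}
    (hg : ContinuousOn g (Icc a b)) (ht : t ∈ Icc a b) : IntervalIntegrable g volume a t :=
  (hg.mono (Icc_subset_Icc_right ht.2)).intervalIntegrable_of_Icc ht.1

theorem hasDerivWithinAt_integral_Icc {a b t : ℝ} {g : ℝ → ℝ} (hg : ContinuousOn g (Icc a b))
    (ht : t ∈ Icc a b) :
    HasDerivWithinAt (fun u => ∫ s in a..u, g s) (g t) (Icc a b) t := by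
  -- the `FTCFilter` instance for `𝓝[Icc a b] t` is found through this `Fact`
  have : Fact (t ∈ Icc a b) := ⟨ht⟩
  exact integral_hasDerivWithinAt_right (hg.intervalIntegrable_of_mem_Icc ht)
    (hg.stronglyMeasurableAtFilter_nhdsWithin measurableSet_Icc t) (hg t ht)

noncomputable def sinConv (c : ℝ) (g : ℝ → ℝ) (t : ℝ) : ℝ :=
  ∫ s in (0 : ℝ)..t, sin (c * (t - s)) * g s

noncomputable def cosConv (c : ℝ) (g : ℝ → ℝ) (t : ℝ) : ℝ :=
  ∫ s in (0 : ℝ)..t, cos (c * (t - s)) * g s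

section Convolution

variable {c t : ℝ} {g g' : ℝ → ℝ}

theorem sinConv_eq (hg : IntervalIntegrable g volume 0 t) :
    sinConv c g t = sin (c * t) * (∫ s in (0 : ℝ)..t, cos (c * s) * g s)
      - cos (c * t) * ∫ s in (0 : ℝ)..t, sin (c * s) * g s := by
  have hcos : IntervalIntegrable (fun s => cos (c * s) * g s) volume 0 t :=
    hg.continuousOn_mul (continuous_cos.comp (continuous_const_mul c)).continuousOn
  have hsin : IntervalIntegrable (fun s => sin (c * s) * g s) volume 0 t :=
    hg.continuousOn_mul (continuous_sin.comp (continuous_const_mul c)).continuousOn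
  rw [sinConv, ← intervalIntegral.integral_const_mul, ← intervalIntegral.integral_const_mul,
    ← integral_sub (hcos.const_mul _) (hsin.const_mul _)]
  refine integral_congr fun s _ => ?_
  simp only [mul_sub, sin_sub]
  ring

theorem cosConv_eq (hg : IntervalIntegrable g volume 0 t) :
    cosConv c g t = cos (c * t) * (∫ s in (0 : ℝ)..t, cos (c * s) * g s)
      + sin (c * t) * ∫ s in (0 : ℝ)..t, sin (c * s) * g s := by
  have hcos : IntervalIntegrable (fun s => cos (c * s) * g s) volume 0 t :=
    hg.continuousOn_mul (continuous_cos.comp (continuous_const_mul c)).continuousOn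
  have hsin : IntervalIntegrable (fun s => sin (c * s) * g s) volume 0 t :=
    hg.continuousOn_mul (continuous_sin.comp (continuous_const_mul c)).continuousOn
  rw [cosConv, ← intervalIntegral.integral_const_mul, ← intervalIntegral.integral_const_mul,
    ← integral_add (hcos.const_mul _) (hsin.const_mul _)]
  refine integral_congr fun s _ => ?_
  simp only [mul_sub, cos_sub]
  ring

theorem mul_sinConv_add_cosConv_eq (hg : ∀ x ∈ [[0, t]], HasDerivWithinAt g (g' x) [[0, t]] x)
    (hg' : IntervalIntegrable g' volume 0 t) :
    c * sinConv c g t + cosConv c g' t = g t - cos (c * t) * g 0 := by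
  have hkernel : ∀ s ∈ [[0, t]], HasDerivWithinAt (fun s => cos (c * (t - s)))
      (c * sin (c * (t - s))) [[0, t]] s := fun s _ =>
    ((((hasDerivAt_id' s).const_sub t).const_mul c).cos.congr_deriv (by ring)).hasDerivWithinAt
  have hgi : IntervalIntegrable g volume 0 t :=
    (ContinuousOn.intervalIntegrable fun x hx => (hg x hx).continuousWithinAt)
  have hibp := integral_deriv_mul_eq_sub_of_hasDerivWithinAt hkernel hg
    ((by fun_prop : Continuous fun s => c * sin (c * (t - s))).intervalIntegrable _ _) hg'
  rw [integral_add (hgi.continuousOn_mul (by fun_prop)) (hg'.continuousOn_mul (by fun_prop))]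
    at hibp
  simpa [sinConv, cosConv, mul_assoc, intervalIntegral.integral_const_mul] using hibp

theorem mul_cosConv_eq (hg : ∀ x ∈ [[0, t]], HasDerivWithinAt g (g' x) [[0, t]] x)
    (hg' : IntervalIntegrable g' volume 0 t) :
    c * cosConv c g t = sin (c * t) * g 0 + sinConv c g' t := by
  have hkernel : ∀ s ∈ [[0, t]], HasDerivWithinAt (fun s => sin (c * (t - s)))
      (-c * cos (c * (t - s))) [[0, t]] s := fun s _ =>
    ((((hasDerivAt_id' s).const_sub t).const_mul c).sin.congr_deriv (by ring)).hasDerivWithinAt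
  have hgi : IntervalIntegrable g volume 0 t :=
    (ContinuousOn.intervalIntegrable fun x hx => (hg x hx).continuousWithinAt)
  have hibp := integral_deriv_mul_eq_sub_of_hasDerivWithinAt hkernel hg
    ((by fun_prop : Continuous fun s => -c * cos (c * (t - s))).intervalIntegrable _ _) hg'
  rw [integral_add (hgi.continuousOn_mul (by fun_prop)) (hg'.continuousOn_mul (by fun_prop))]
    at hibp
  simp only [mul_assoc, intervalIntegral.integral_const_mul, sub_self, mul_zero, sin_zero,
    zero_mul, sub_zero, zero_sub] at hibp
  rw [cosConv, sinConv]
  linarith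

theorem hasDerivWithinAt_integral_comp_mul_mul {k : ℝ → ℝ} {T : ℝ} (hk : Continuous k)
    (hg : ContinuousOn g (Icc 0 T)) (ht : t ∈ Icc 0 T) :
    HasDerivWithinAt (fun u => ∫ s in (0 : ℝ)..u, k (c * s) * g s) (k (c * t) * g t) (Icc 0 T) t :=
  hasDerivWithinAt_integral_Icc ((hk.comp (continuous_const_mul c)).continuousOn.mul hg) ht

theorem hasDerivWithinAt_sinConv {T : ℝ} (hg : ContinuousOn g (Icc 0 T)) (ht : t ∈ Icc 0 T) :
    HasDerivWithinAt (sinConv c g) (c * cosConv c g t) (Icc 0 T) t := by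
  have hC := hasDerivWithinAt_integral_comp_mul_mul (c := c) continuous_cos hg ht
  have hS := hasDerivWithinAt_integral_comp_mul_mul (c := c) continuous_sin hg ht
  have hsin := ((hasDerivAt_id' t).const_mul c).sin.hasDerivWithinAt (s := Icc 0 T)
  have hcos := ((hasDerivAt_id' t).const_mul c).cos.hasDerivWithinAt (s := Icc 0 T)
  refine ((hsin.mul hC).sub (hcos.mul hS)).congr
    (fun u hu => sinConv_eq (hg.intervalIntegrable_of_mem_Icc hu))
    (sinConv_eq (hg.intervalIntegrable_of_mem_Icc ht)) |>.congr_deriv ?_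
  rw [cosConv_eq (hg.intervalIntegrable_of_mem_Icc ht)]
  ring

theorem hasDerivWithinAt_cosConv {T : ℝ} (hg : ContinuousOn g (Icc 0 T)) (ht : t ∈ Icc 0 T) :
    HasDerivWithinAt (cosConv c g) (g t - c * sinConv c g t) (Icc 0 T) t := by
  have hC := hasDerivWithinAt_integral_comp_mul_mul (c := c) continuous_cos hg ht
  have hS := hasDerivWithinAt_integral_comp_mul_mul (c := c) continuous_sin hg ht
  have hsin := ((hasDerivAt_id' t).const_mul c).sin.hasDerivWithinAt (s := Icc 0 T)
  have hcos := ((hasDerivAt_id' t).const_mul c).cos.hasDerivWithinAt (s := Icc 0 T)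
  refine ((hcos.mul hC).add (hsin.mul hS)).congr
    (fun u hu => cosConv_eq (hg.intervalIntegrable_of_mem_Icc hu))
    (cosConv_eq (hg.intervalIntegrable_of_mem_Icc ht)) |>.congr_deriv ?_
  rw [sinConv_eq (hg.intervalIntegrable_of_mem_Icc ht)]
  linear_combination g t * sin_sq_add_cos_sq (c * t)

end Convolution

theorem duhamel_second_derivative_three_ibp_general (lam T : ℝ) (hlam : 0 < lam)
    (f f' f'' f''' : ℝ → ℝ)
    (hf' : ∀ t ∈ Set.Icc (0 : ℝ) T, HasDerivWithinAt f (f' t) (Set.Icc (0 : ℝ) T) t)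
    (hf'' : ∀ t ∈ Set.Icc (0 : ℝ) T, HasDerivWithinAt f' (f'' t) (Set.Icc (0 : ℝ) T) t)
    (hf''' : ∀ t ∈ Set.Icc (0 : ℝ) T, HasDerivWithinAt f'' (f''' t) (Set.Icc (0 : ℝ) T) t)
    (hf'''c : ContinuousOn f''' (Set.Icc (0 : ℝ) T)) :
    ∃ I' : ℝ → ℝ,
      (∀ t ∈ Set.Icc (0 : ℝ) T,
        HasDerivWithinAt
          (fun t => ∫ s in (0 : ℝ)..t, Real.sin (Real.sqrt lam * (t - s)) * f s)
          (I' t) (Set.Icc (0 : ℝ) T) t) ∧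
      (∀ t ∈ Set.Icc (0 : ℝ) T,
        HasDerivWithinAt I'
          (Real.sqrt lam * f 0 * Real.cos (Real.sqrt lam * t)
            + f' 0 * Real.sin (Real.sqrt lam * t)
            - (Real.sqrt lam)⁻¹ * f'' 0 * Real.cos (Real.sqrt lam * t)
            + (Real.sqrt lam)⁻¹ * f'' t
            - (Real.sqrt lam)⁻¹ *
                ∫ s in (0 : ℝ)..t, Real.cos (Real.sqrt lam * (t - s)) * f''' s)
          (Set.Icc (0 : ℝ) T) t) := by
  set c := √lam
  have hc : c ≠ 0 := (sqrt_pos.2 hlam).ne'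
  have hfc : ContinuousOn f (Icc 0 T) := fun t ht => (hf' t ht).continuousWithinAt
  refine ⟨fun t => c * cosConv c f t, fun t ht => hasDerivWithinAt_sinConv hfc ht,
    fun t ht => ((hasDerivWithinAt_cosConv hfc ht).const_mul c).congr_deriv ?_⟩
  have hsub : [[0, t]] ⊆ Icc 0 T := uIcc_subset_Icc (left_mem_Icc.2 (ht.1.trans ht.2)) ht
  have hf'c : ContinuousOn f' (Icc 0 T) := fun t ht => (hf'' t ht).continuousWithinAt
  have hf''c : ContinuousOn f'' (Icc 0 T) := fun t ht => (hf''' t ht).continuousWithinAt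
  have ibp_f := mul_sinConv_add_cosConv_eq (c := c) (fun x hx => (hf' x (hsub hx)).mono hsub)
    (hf'c.intervalIntegrable_of_mem_Icc ht)
  have ibp_f' := mul_cosConv_eq (c := c) (fun x hx => (hf'' x (hsub hx)).mono hsub)
    (hf''c.intervalIntegrable_of_mem_Icc ht)
  have ibp_f'' := mul_sinConv_add_cosConv_eq (c := c)
    (fun x hx => (hf''' x (hsub hx)).mono hsub) (hf'''c.intervalIntegrable_of_mem_Icc ht)
  rw [cosConv] at ibp_f''
  field_simp
  linear_combination (-c ^ 2) * ibp_f + c * ibp_f' + ibp_f''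

/-- Second derivative of the Duhamel integral after three integrations by parts. -/
theorem duhamel_second_derivative_three_ibp (lam T : ℝ) (hlam : 0 < lam) (hT : 0 < T)
    (f f' f'' f''' : ℝ → ℝ)
    (hf' : ∀ t ∈ Set.Icc (0 : ℝ) T, HasDerivWithinAt f (f' t) (Set.Icc (0 : ℝ) T) t)
    (hf'' : ∀ t ∈ Set.Icc (0 : ℝ) T, HasDerivWithinAt f' (f'' t) (Set.Icc (0 : ℝ) T) t)
    (hf''' : ∀ t ∈ Set.Icc (0 : ℝ) T, HasDerivWithinAt f'' (f''' t) (Set.Icc (0 : ℝ) T) t)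
    (hf'''c : ContinuousOn f''' (Set.Icc (0 : ℝ) T)) :
    ∃ I' : ℝ → ℝ,
      (∀ t ∈ Set.Icc (0 : ℝ) T,
        HasDerivWithinAt
          (fun t => ∫ s in (0 : ℝ)..t, Real.sin (Real.sqrt lam * (t - s)) * f s)
          (I' t) (Set.Icc (0 : ℝ) T) t) ∧
      (∀ t ∈ Set.Icc (0 : ℝ) T,
        HasDerivWithinAt I'
          (Real.sqrt lam * f 0 * Real.cos (Real.sqrt lam * t)
            + f' 0 * Real.sin (Real.sqrt lam * t)
            - (Real.sqrt lam)⁻¹ * f'' 0 * Real.cos (Real.sqrt lam * t)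
            + (Real.sqrt lam)⁻¹ * f'' t
            - (Real.sqrt lam)⁻¹ *
                ∫ s in (0 : ℝ)..t, Real.cos (Real.sqrt lam * (t - s)) * f''' s)
          (Set.Icc (0 : ℝ) T) t) :=
  duhamel_second_derivative_three_ibp_general lam T hlam f f' f'' f''' hf' hf'' hf''' hf'''c
end
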